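/- arXiv:2504.01223 — 3 statements merged into one kernel-verified Lean document; each statement's English description precedes it below -/
import Mathlib

section
/- Let ν0 and ν1 be Borel probability measures on ℝ with CDFs F_{ν0}, F_{ν1}, let p0, p1 ≥ 0 with p0 + p1 = 1, and let ν := p0·ν0 + p1·ν1 be the mixture (the law P_Z of the overall model score Z = f(X) when P(G=k) = p_k and f(X)|G=k ∼ ν_k). Let Z0 ∼ ν0 and Z1 ∼ ν1 be random variables, and let F̃_ν denote the left-continuous version of the CDF of ν. Then ∫_ℝ |F_{ν0}(t) − F_{ν1}(t)| ν(dt) = W_1(P_{F̃_ν(Z0)}, P_{F̃_ν(Z1)}), i.e., the distribution-invariant model bias ∫ bias^C(f_t|X,G) P_Z(dt) equals the Wasserstein-1 distance between the laws of F̃_Z(Z0) and F̃_Z(Z1). -/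
open MeasureTheory Set

/-- The cumulative distribution function of a Borel probability measure on `ℝ`. -/
noncomputable def mcdf (ν : MeasureTheory.Measure ℝ) (t : ℝ) : ℝ := (ν (Set.Iic t)).toReal

/-- The left-continuous version of the CDF of `ν`: `F̃_ν(t) = ν((-∞, t))`. -/
noncomputable def mlcdf (ν : MeasureTheory.Measure ℝ) (t : ℝ) : ℝ := (ν (Set.Iio t)).toReal

/-- `γ` is a coupling of `μ` and `ν`. -/
def IsCoupling (γ : MeasureTheory.Measure (ℝ × ℝ)) (μ ν : MeasureTheory.Measure ℝ) : Prop :=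
  γ.map Prod.fst = μ ∧ γ.map Prod.snd = ν

/-- The Wasserstein-1 distance between two Borel probability measures on `ℝ`. -/
noncomputable def W1 (μ ν : MeasureTheory.Measure ℝ) : ℝ :=
  sInf { r : ℝ | ∃ γ : MeasureTheory.Measure (ℝ × ℝ),
    MeasureTheory.IsProbabilityMeasure γ ∧ IsCoupling γ μ ν ∧ r = ∫ p, |p.1 - p.2| ∂γ }


/-!
Represent `ν₀, ν₁` comonotonically as `Qᵢ(U)`, with `U` uniform on `(0, 1)` and `Qᵢ` the quantile
functions. For any pair `(X, Y)` the layer-cake formula gives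
`E|X - Y| = ∫ P(exactly one of X ≤ s, Y ≤ s) ds ≥ ∫ |F_X(s) - F_Y(s)| ds`, with equality when
`X` and `Y` are monotone functions of one variable, since then the events `{X ≤ s}` and `{Y ≤ s}`
are nested. Hence `W₁(μ₀, μ₁) = ∫ |F_{μ₀} - F_{μ₁}|`, attained by the quantile coupling.

As `F̃_ν` is monotone, `F̃_ν(Q₀ U)` and `F̃_ν(Q₁ U)` are again comonotone, with the laws of
`F̃_ν(Z₀)` and `F̃_ν(Z₁)`. So the distance is `E|F̃_ν(Q₀ U) - F̃_ν(Q₁ U)| = E ν[min, max)`, which by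
Fubini is `∫ P(exactly one of Q₀ U ≤ t, Q₁ U ≤ t) ν(dt) = ∫ |F₀(t) - F₁(t)| ν(dt)`, the last step
by nestedness again.
-/

open scoped ENNReal symmDiff

section Coupling

variable {α : Type*} [MeasurableSpace α]

lemma mem_Ico_min_max_iff {a b s : ℝ} : s ∈ Ico (min a b) (max a b) ↔ s ∈ Ici a ∆ Ici b := by
  simp only [mem_Ico, mem_symmDiff, mem_Ici, min_le_iff, lt_max_iff, not_le]
  grind

lemma measureReal_sub_measureReal (μ : Measure α) [IsFiniteMeasure μ] {s t : Set α}
    (hs : MeasurableSet s) (ht : MeasurableSet t) :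
    μ.real s - μ.real t = μ.real (s \ t) - μ.real (t \ s) := by
  rw [← measureReal_inter_add_sdiff (μ := μ) (s := s) ht,
    ← measureReal_inter_add_sdiff (μ := μ) (s := t) hs, inter_comm]
  ring

lemma lintegral_measure_Ico_min_max (P : Measure α) (ρ : Measure ℝ) [SFinite P] [SFinite ρ]
    {f g : α → ℝ} (hf : Measurable f) (hg : Measurable g) :
    ∫⁻ a, ρ (Ico (min (f a) (g a)) (max (f a) (g a))) ∂P
      = ∫⁻ s, P ((f ⁻¹' Iic s) ∆ (g ⁻¹' Iic s)) ∂ρ := by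
  set E : Set (α × ℝ) := {p | p.2 ∈ Ico (min (f p.1) (g p.1)) (max (f p.1) (g p.1))}
  have hE : MeasurableSet E :=
    (measurableSet_le (by fun_prop) measurable_snd).inter
      (measurableSet_lt measurable_snd (by fun_prop))
  calc ∫⁻ a, ρ (Ico (min (f a) (g a)) (max (f a) (g a))) ∂P = P.prod ρ E :=
        (Measure.prod_apply hE).symm
    _ = ∫⁻ s, P ((·, s) ⁻¹' E) ∂ρ := Measure.prod_apply_symm hE
    _ = ∫⁻ s, P ((f ⁻¹' Iic s) ∆ (g ⁻¹' Iic s)) ∂ρ := by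
      congr! 3 with s
      ext a
      simp only [E, mem_preimage, mem_ofPred_eq, mem_Ico_min_max_iff, mem_symmDiff, mem_Ici,
        mem_Iic]

lemma lintegral_ofReal_abs_sub_eq_lintegral_measure_symmDiff (P : Measure α) [SFinite P]
    {f g : α → ℝ} (hf : Measurable f) (hg : Measurable g) :
    ∫⁻ a, ENNReal.ofReal |f a - g a| ∂P = ∫⁻ s, P ((f ⁻¹' Iic s) ∆ (g ⁻¹' Iic s)) := by
  simp_rw [← max_sub_min_eq_abs', ← Real.volume_Ico]
  exact lintegral_measure_Ico_min_max P volume hf hg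

lemma mcdf_map {P : Measure α} {f : α → ℝ} (hf : Measurable f) (s : ℝ) :
    mcdf (P.map f) s = P.real (f ⁻¹' Iic s) := by
  rw [mcdf, Measure.map_apply hf measurableSet_Iic]
  rfl

lemma ofReal_abs_mcdf_map_sub_le (P : Measure α) [IsFiniteMeasure P] {f g : α → ℝ}
    (hf : Measurable f) (hg : Measurable g) (s : ℝ) :
    ENNReal.ofReal |mcdf (P.map f) s - mcdf (P.map g) s|
      ≤ P ((f ⁻¹' Iic s) ∆ (g ⁻¹' Iic s)) := by
  have hA := hf (measurableSet_Iic (a := s))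
  have hB := hg (measurableSet_Iic (a := s))
  rw [mcdf_map hf, mcdf_map hg, measureReal_sub_measureReal P hA hB, ← ofReal_measureReal,
    measureReal_symmDiff_eq hA hB]
  gcongr
  exact (abs_sub _ _).trans_eq (by simp only [abs_of_nonneg measureReal_nonneg])

lemma ofReal_abs_mcdf_map_sub_eq (P : Measure α) [IsFiniteMeasure P] {f g : α → ℝ}
    (hf : Measurable f) (hg : Measurable g) {s : ℝ}
    (h : P (f ⁻¹' Iic s \ g ⁻¹' Iic s) = 0 ∨ P (g ⁻¹' Iic s \ f ⁻¹' Iic s) = 0) :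
    ENNReal.ofReal |mcdf (P.map f) s - mcdf (P.map g) s|
      = P ((f ⁻¹' Iic s) ∆ (g ⁻¹' Iic s)) := by
  have hA := hf (measurableSet_Iic (a := s))
  have hB := hg (measurableSet_Iic (a := s))
  rw [mcdf_map hf, mcdf_map hg, measureReal_sub_measureReal P hA hB, ← ofReal_measureReal,
    measureReal_symmDiff_eq hA hB]
  rcases h with h | h <;> simp [Measure.real, h]

lemma measure_sdiff_eq_zero_or_of_monotoneOn [LinearOrder α] {P : Measure α} {T : Set α}
    (hT : ∀ᵐ a ∂P, a ∈ T) {f g : α → ℝ} (hf : MonotoneOn f T) (hg : MonotoneOn g T) (s : ℝ) :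
    P (f ⁻¹' Iic s \ g ⁻¹' Iic s) = 0 ∨ P (g ⁻¹' Iic s \ f ⁻¹' Iic s) = 0 := by
  have nested : (∀ a ∈ T, f a ≤ s → g a ≤ s) ∨ (∀ a ∈ T, g a ≤ s → f a ≤ s) := by
    by_contra! h
    obtain ⟨⟨a, ha, hfa, hga⟩, ⟨b, hb, hgb, hfb⟩⟩ := h
    rcases le_total a b with hab | hab
    · exact ((hg ha hb hab).trans hgb).not_gt hga
    · exact ((hf hb ha hab).trans hfa).not_gt hfb
  refine nested.imp (fun h => measure_mono_null ?_ (ae_iff.1 hT))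
    (fun h => measure_mono_null ?_ (ae_iff.1 hT)) <;>
    exact fun a ⟨ha₁, ha₂⟩ haT => ha₂ (h a haT ha₁)

lemma lintegral_abs_mcdf_map_sub_le (P : Measure α) [IsFiniteMeasure P] {f g : α → ℝ}
    (hf : Measurable f) (hg : Measurable g) :
    ∫⁻ s, ENNReal.ofReal |mcdf (P.map f) s - mcdf (P.map g) s|
      ≤ ∫⁻ a, ENNReal.ofReal |f a - g a| ∂P := by
  rw [lintegral_ofReal_abs_sub_eq_lintegral_measure_symmDiff P hf hg]
  exact lintegral_mono (ofReal_abs_mcdf_map_sub_le P hf hg)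

lemma lintegral_abs_mcdf_map_sub_of_monotoneOn [LinearOrder α] (P : Measure α)
    [IsFiniteMeasure P] {T : Set α} (hT : ∀ᵐ a ∂P, a ∈ T) {f g : α → ℝ} (hf : Measurable f)
    (hg : Measurable g) (hfT : MonotoneOn f T) (hgT : MonotoneOn g T) :
    ∫⁻ s, ENNReal.ofReal |mcdf (P.map f) s - mcdf (P.map g) s|
      = ∫⁻ a, ENNReal.ofReal |f a - g a| ∂P := by
  rw [lintegral_ofReal_abs_sub_eq_lintegral_measure_symmDiff P hf hg]
  exact lintegral_congr fun s =>
    ofReal_abs_mcdf_map_sub_eq P hf hg (measure_sdiff_eq_zero_or_of_monotoneOn hT hfT hgT s)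

end Coupling

lemma monotone_mcdf (ν : Measure ℝ) [IsFiniteMeasure ν] : Monotone (mcdf ν) :=
  fun _ _ h => measureReal_mono (Iic_subset_Iic.2 h)

lemma monotone_mlcdf (ν : Measure ℝ) [IsFiniteMeasure ν] : Monotone (mlcdf ν) :=
  fun _ _ h => measureReal_mono (Iio_subset_Iio h)

lemma measure_Ico_min_max_eq_ofReal_abs_mlcdf_sub (ν : Measure ℝ) [IsFiniteMeasure ν] (a b : ℝ) :
    ν (Ico (min a b) (max a b)) = ENNReal.ofReal |mlcdf ν a - mlcdf ν b| := by
  have hsplit : mlcdf ν (max a b) = mlcdf ν (min a b) + ν.real (Ico (min a b) (max a b)) := by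
    simp only [mlcdf, ← measureReal_def]
    rw [← Iio_union_Ico_eq_Iio min_le_max, measureReal_union _ measurableSet_Ico]
    exact Set.disjoint_left.2 fun x hx hx' => hx'.1.not_gt hx
  rw [← max_sub_min_eq_abs', ← (monotone_mlcdf ν).map_max, ← (monotone_mlcdf ν).map_min, hsplit,
    add_sub_cancel_left, ofReal_measureReal]

lemma measurable_mlcdf (ν : Measure ℝ) [IsFiniteMeasure ν] : Measurable (mlcdf ν) :=
  (monotone_mlcdf ν).measurable

instance : IsProbabilityMeasure (volume.restrict (Ioo (0 : ℝ) 1)) := ⟨by simp⟩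

lemma volume_Iic_inter_Ioo {a : ℝ} (ha : a ≤ 1) :
    volume (Iic a ∩ Ioo 0 1) = ENNReal.ofReal a := by
  refine le_antisymm ?_ ?_
  · calc volume (Iic a ∩ Ioo 0 1) ≤ volume (Ioc 0 a) :=
          measure_mono fun u hu => ⟨hu.2.1, hu.1⟩
      _ = ENNReal.ofReal a := by rw [Real.volume_Ioc, sub_zero]
  · calc ENNReal.ofReal a = volume (Ioo 0 a) := by rw [Real.volume_Ioo, sub_zero]
      _ ≤ volume (Iic a ∩ Ioo 0 1) :=
          measure_mono fun u hu => ⟨hu.2.le, hu.1, hu.2.trans_le ha⟩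

section Quantile

open ProbabilityTheory Filter Topology

variable (μ : Measure ℝ)

-- Set to `0` off `(0, 1)`, where `{t | u ≤ cdf μ t}` is unbounded below or may be empty.
noncomputable def quantile (u : ℝ) : ℝ := if u ∈ Ioo 0 1 then sInf {t | u ≤ cdf μ t} else 0

lemma quantile_le_iff {u : ℝ} (hu : u ∈ Ioo 0 1) {t : ℝ} : quantile μ u ≤ t ↔ u ≤ cdf μ t := by
  have hne : {t | u ≤ cdf μ t}.Nonempty :=
    ((tendsto_cdf_atTop μ).eventually (eventually_gt_nhds hu.2)).exists.imp fun _ => le_of_lt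
  have hbdd : BddBelow {t | u ≤ cdf μ t} := by
    obtain ⟨a, ha⟩ := eventually_atBot.1
      ((tendsto_cdf_atBot μ).eventually (eventually_lt_nhds hu.1))
    exact ⟨a, fun t ht => le_of_not_gt fun hta => (ha t hta.le).not_ge ht⟩
  rw [quantile, if_pos hu]
  refine ⟨fun h => ?_, fun h => csInf_le hbdd h⟩
  -- by right-continuity of the CDF the infimum belongs to the set
  have hright : ∀ᶠ t in 𝓝[>] (sInf {t | u ≤ cdf μ t}), u ≤ cdf μ t :=
    eventually_nhdsWithin_of_forall fun t ht =>
      let ⟨r, hr, hrt⟩ := exists_lt_of_csInf_lt hne ht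
      hr.trans (monotone_cdf μ hrt.le)
  exact (ge_of_tendsto (((cdf μ).right_continuous _).mono Ioi_subset_Ici_self).tendsto
    hright).trans (monotone_cdf μ h)

lemma monotoneOn_quantile : MonotoneOn (quantile μ) (Ioo 0 1) := fun _ hu _ hv huv =>
  (quantile_le_iff μ hu).2 (huv.trans ((quantile_le_iff μ hv).1 le_rfl))

lemma measurable_quantile : Measurable (quantile μ) := by
  refine measurable_of_restrict_of_restrict_compl measurableSet_Ioo
    (Monotone.measurable fun u v huv => monotoneOn_quantile μ u.2 v.2 huv) ?_
  convert measurable_const (a := (0 : ℝ)) using 1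
  funext ⟨u, hu⟩
  exact if_neg hu

lemma map_quantile [IsProbabilityMeasure μ] :
    (volume.restrict (Ioo 0 1)).map (quantile μ) = μ := by
  have := Measure.isProbabilityMeasure_map (μ := volume.restrict (Ioo (0 : ℝ) 1))
    (measurable_quantile μ).aemeasurable
  refine Measure.ext_of_Iic _ _ fun t => ?_
  have hpre : quantile μ ⁻¹' Iic t ∩ Ioo 0 1 = Iic (cdf μ t) ∩ Ioo 0 1 := by
    ext u
    exact and_congr_left fun hu => quantile_le_iff μ hu
  rw [Measure.map_apply (measurable_quantile μ) measurableSet_Iic,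
    Measure.restrict_apply (measurable_quantile μ measurableSet_Iic), hpre,
    volume_Iic_inter_Ioo (cdf_le_one μ t), ofReal_cdf]

end Quantile

lemma lintegral_abs_mlcdf_quantile_sub (ν : Measure ℝ) [IsFiniteMeasure ν] (ν₀ ν₁ : Measure ℝ)
    [IsProbabilityMeasure ν₀] [IsProbabilityMeasure ν₁] :
    ∫⁻ u, ENNReal.ofReal |mlcdf ν (quantile ν₀ u) - mlcdf ν (quantile ν₁ u)|
        ∂(volume.restrict (Ioo 0 1))
      = ∫⁻ t, ENNReal.ofReal |mcdf ν₀ t - mcdf ν₁ t| ∂ν := by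
  simp_rw [← measure_Ico_min_max_eq_ofReal_abs_mlcdf_sub]
  rw [lintegral_measure_Ico_min_max _ ν (measurable_quantile ν₀) (measurable_quantile ν₁)]
  refine lintegral_congr fun t => ?_
  rw [← ofReal_abs_mcdf_map_sub_eq _ (measurable_quantile ν₀) (measurable_quantile ν₁)
    (measure_sdiff_eq_zero_or_of_monotoneOn (ae_restrict_mem measurableSet_Ioo)
      (monotoneOn_quantile ν₀) (monotoneOn_quantile ν₁) t), map_quantile, map_quantile]

theorem W1_eq_toReal_lintegral_abs_mcdf_sub (μ₀ μ₁ : Measure ℝ) [IsProbabilityMeasure μ₀]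
    [IsProbabilityMeasure μ₁] (h₀ : Integrable (fun x => x) μ₀) (h₁ : Integrable (fun x => x) μ₁) :
    W1 μ₀ μ₁ = (∫⁻ s, ENNReal.ofReal |mcdf μ₀ s - mcdf μ₁ s|).toReal := by
  refine IsLeast.csInf_eq ⟨?_, ?_⟩
  · have hQ := (measurable_quantile μ₀).prodMk (measurable_quantile μ₁)
    refine ⟨(volume.restrict (Ioo 0 1)).map fun u => (quantile μ₀ u, quantile μ₁ u),
      Measure.isProbabilityMeasure_map hQ.aemeasurable, ⟨?_, ?_⟩, ?_⟩
    · rw [Measure.map_map measurable_fst hQ]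
      exact map_quantile μ₀
    · rw [Measure.map_map measurable_snd hQ]
      exact map_quantile μ₁
    · rw [integral_map hQ.aemeasurable (by fun_prop),
        integral_eq_lintegral_of_nonneg_ae (ae_of_all _ fun _ => abs_nonneg _) (by fun_prop),
        ← lintegral_abs_mcdf_map_sub_of_monotoneOn _ (ae_restrict_mem measurableSet_Ioo)
          (measurable_quantile μ₀) (measurable_quantile μ₁) (monotoneOn_quantile μ₀)
          (monotoneOn_quantile μ₁), map_quantile, map_quantile]
  · rintro r ⟨γ, hγ, ⟨rfl, rfl⟩, rfl⟩
    have hcost : Integrable (fun p : ℝ × ℝ => |p.1 - p.2|) γ :=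
      (((integrable_map_measure (by fun_prop) (by fun_prop)).1 h₀).sub
        ((integrable_map_measure (by fun_prop) (by fun_prop)).1 h₁)).abs
    refine ENNReal.toReal_le_of_le_ofReal (integral_nonneg fun _ => abs_nonneg _) ?_
    rw [ofReal_integral_eq_lintegral_ofReal hcost (ae_of_all _ fun _ => abs_nonneg _)]
    exact lintegral_abs_mcdf_map_sub_le γ measurable_fst measurable_snd

lemma integrable_map_mlcdf {α : Type*} [MeasurableSpace α] (P : Measure α) [IsFiniteMeasure P]
    (ν : Measure ℝ) [IsFiniteMeasure ν] {Z : α → ℝ} (hZ : Measurable Z) :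
    Integrable (fun x => x) (P.map fun a => mlcdf ν (Z a)) := by
  refine (integrable_map_measure (by fun_prop) ((measurable_mlcdf ν).comp hZ).aemeasurable).2 ?_
  refine Integrable.of_bound (((measurable_mlcdf ν).comp hZ).aestronglyMeasurable) (ν.real univ)
    (ae_of_all _ fun a => ?_)
  rw [Real.norm_eq_abs]
  exact (abs_of_nonneg measureReal_nonneg).trans_le (measureReal_mono (subset_univ _))

lemma map_comp_eq_map_comp_quantile {Ω : Type*} [MeasurableSpace Ω] {P : Measure Ω}
    {Z : Ω → ℝ} (hZ : Measurable Z) {μ : Measure ℝ} [IsProbabilityMeasure μ] (hμ : P.map Z = μ)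
    {h : ℝ → ℝ} (hh : Measurable h) :
    P.map (fun ω => h (Z ω)) = (volume.restrict (Ioo 0 1)).map fun u => h (quantile μ u) :=
  calc P.map (fun ω => h (Z ω)) = (P.map Z).map h := (Measure.map_map hh hZ).symm
    _ = ((volume.restrict (Ioo 0 1)).map (quantile μ)).map h := by rw [hμ, map_quantile]
    _ = _ := Measure.map_map hh (measurable_quantile μ)

theorem stmt_1_general {Ω : Type*} [MeasurableSpace Ω] (ℙ : MeasureTheory.Measure Ω)
    [MeasureTheory.IsProbabilityMeasure ℙ]
    (ν0 ν1 : MeasureTheory.Measure ℝ)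
    [MeasureTheory.IsProbabilityMeasure ν0] [MeasureTheory.IsProbabilityMeasure ν1]
    (p0 p1 : ℝ)
    (ν : MeasureTheory.Measure ℝ)
    (hν : ν = ENNReal.ofReal p0 • ν0 + ENNReal.ofReal p1 • ν1)
    (Z0 Z1 : Ω → ℝ) (hZ0 : Measurable Z0) (hZ1 : Measurable Z1)
    (hlaw0 : ℙ.map Z0 = ν0) (hlaw1 : ℙ.map Z1 = ν1) :
    ∫ t, |mcdf ν0 t - mcdf ν1 t| ∂ν
      = W1 (ℙ.map (fun ω => mlcdf ν (Z0 ω))) (ℙ.map (fun ω => mlcdf ν (Z1 ω))) := by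
  have : IsFiniteMeasure ν := ⟨by simp [hν]⟩
  have := Measure.isProbabilityMeasure_map (μ := ℙ) (f := fun ω => mlcdf ν (Z0 ω))
    ((measurable_mlcdf ν).comp hZ0).aemeasurable
  have := Measure.isProbabilityMeasure_map (μ := ℙ) (f := fun ω => mlcdf ν (Z1 ω))
    ((measurable_mlcdf ν).comp hZ1).aemeasurable
  rw [W1_eq_toReal_lintegral_abs_mcdf_sub _ _ (integrable_map_mlcdf ℙ ν hZ0)
    (integrable_map_mlcdf ℙ ν hZ1),
    map_comp_eq_map_comp_quantile hZ0 hlaw0 (measurable_mlcdf ν),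
    map_comp_eq_map_comp_quantile hZ1 hlaw1 (measurable_mlcdf ν),
    lintegral_abs_mcdf_map_sub_of_monotoneOn _ (ae_restrict_mem measurableSet_Ioo)
      (f := fun u => mlcdf ν (quantile ν0 u)) (g := fun u => mlcdf ν (quantile ν1 u))
      ((measurable_mlcdf ν).comp (measurable_quantile ν0))
      ((measurable_mlcdf ν).comp (measurable_quantile ν1))
      ((monotone_mlcdf ν).comp_monotoneOn (monotoneOn_quantile ν0))
      ((monotone_mlcdf ν).comp_monotoneOn (monotoneOn_quantile ν1)),
    lintegral_abs_mlcdf_quantile_sub]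
  exact integral_eq_lintegral_of_nonneg_ae (ae_of_all _ fun _ => abs_nonneg _)
    (((monotone_mcdf ν0).measurable.sub (monotone_mcdf ν1).measurable).abs.aestronglyMeasurable)

/-- For the mixture `ν = p0·ν0 + p1·ν1`, the distribution-invariant
model bias `∫ |F_{ν0} - F_{ν1}| dν` equals the Wasserstein-1 distance between the laws
of `F̃_ν(Z0)` and `F̃_ν(Z1)`, where `F̃_ν` is the left-continuous CDF of `ν`. -/
theorem stmt_1 {Ω : Type*} [MeasurableSpace Ω] (ℙ : MeasureTheory.Measure Ω)
    [MeasureTheory.IsProbabilityMeasure ℙ]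
    (ν0 ν1 : MeasureTheory.Measure ℝ)
    [MeasureTheory.IsProbabilityMeasure ν0] [MeasureTheory.IsProbabilityMeasure ν1]
    (p0 p1 : ℝ) (hp0 : 0 ≤ p0) (hp1 : 0 ≤ p1) (hsum : p0 + p1 = 1)
    (ν : MeasureTheory.Measure ℝ)
    (hν : ν = ENNReal.ofReal p0 • ν0 + ENNReal.ofReal p1 • ν1)
    (Z0 Z1 : Ω → ℝ) (hZ0 : Measurable Z0) (hZ1 : Measurable Z1)
    (hlaw0 : ℙ.map Z0 = ν0) (hlaw1 : ℙ.map Z1 = ν1) :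
    ∫ t, |mcdf ν0 t - mcdf ν1 t| ∂ν
      = W1 (ℙ.map (fun ω => mlcdf ν (Z0 ω))) (ℙ.map (fun ω => mlcdf ν (Z1 ω))) :=
  stmt_1_general ℙ ν0 ν1 p0 p1 ν hν Z0 Z1 hZ0 hZ1 hlaw0 hlaw1
end

section
/- (Monte Carlo estimator bound.) Let h : [−1,1] → [0,∞) be Lipschitz with Lipschitz constant C_h, and let μ be a Borel probability measure on ℝ. Let ν0, ν1 be Borel probability measures on ℝ, let r_s : ℝ → [0,1] be nondecreasing and measurable, and define the relaxed CDFs F_k^{(s)}(t) := 1 − ∫ r_s(z−t) dν_k(z) and B_s(t) := F_0^{(s)}(t) − F_1^{(s)}(t). Let Z_0^{(1)},…,Z_0^{(m0)} be i.i.d. with law ν0, Z_1^{(1)},…,Z_1^{(m1)} i.i.d. with law ν1, and t^{(1)},…,t^{(T)} i.i.d. with law μ, with all three families mutually independent. Define the empirical relaxed difference B̂(t) := (1/m1)Σ_{i=1}^{m1} r_s(Z_1^{(i)} − t) − (1/m0)Σ_{i=1}^{m0} r_s(Z_0^{(i)} − t). Then E[( (1/T)Σ_{j=1}^T h(B̂(t^{(j)}))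 − ∫_ℝ h(B_s(t)) μ(dt) )²] ≤ 8C_h²/min(m0,m1) + 2C_h²/T. In particular, the estimation error converges to 0 in L²(P) as m0, m1, T → ∞, uniformly in s. -/
/-!
Extend `h` to a `C_h`-Lipschitz function `H` on `ℝ`; since `B̂(t)` and `B_s(t)` lie in `[-1, 1]`,
`h` may be replaced by `H`. Splitting the error at `H (B_s (t_j))` and using `(a + b)² ≤ 2a² + 2b²`
leaves two averages over `j`. Conditionally on `t_j`, the terms `r (Z_k^{(i)} - t_j)` are i.i.d.
with mean `1 - F_k^{(s)}(t_j)`, so once centred they are uncorrelated and each empirical mean has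
mean squared error at most `1 / m_k`; the Lipschitz bound turns this into
`2 C_h² (1 / m₀ + 1 / m₁)` for the average of `H (B̂ (t_j)) - H (B_s (t_j))`. The terms
`H (B_s (t_j))` are i.i.d. with values in an interval of length `2 C_h`, so their variance is at
most `C_h²` and their average has mean squared error at most `C_h² / T`.
-/

open MeasureTheory Set ProbabilityTheory

/-- The relaxed CDF `F^{(s)}(t) = 1 - ∫ r(z - t) dν(z)` associated with a
relaxation function `r` and a measure `ν` on `ℝ`. -/
noncomputable def relaxedCDF (r : ℝ → ℝ) (ν : MeasureTheory.Measure ℝ) (t : ℝ) : ℝ :=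
  1 - ∫ z, r (z - t) ∂ν

open Function
open scoped NNReal ENNReal

lemma relaxedCDF_sub_relaxedCDF (r : ℝ → ℝ) (ν₀ ν₁ : Measure ℝ) (t : ℝ) :
    relaxedCDF r ν₀ t - relaxedCDF r ν₁ t = ∫ z, r (z - t) ∂ν₁ - ∫ z, r (z - t) ∂ν₀ := by
  simp only [relaxedCDF]; ring

lemma one_div_mul_sum_mem_Icc {n : ℕ} (hn : 0 < n) {x : Fin n → ℝ}
    (hx : ∀ i, x i ∈ Icc (0 : ℝ) 1) : (1 / (n : ℝ)) * ∑ i, x i ∈ Icc (0 : ℝ) 1 := by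
  have hn' : (0 : ℝ) < n := by exact_mod_cast hn
  refine ⟨mul_nonneg (by positivity) (Finset.sum_nonneg fun i _ => (hx i).1), ?_⟩
  calc (1 / (n : ℝ)) * ∑ i, x i ≤ (1 / (n : ℝ)) * ∑ _i : Fin n, 1 := by
        gcongr with i; exact (hx i).2
    _ = 1 := by simp [hn'.ne']

lemma one_div_mul_sum_sub {n : ℕ} (hn : 0 < n) (x : Fin n → ℝ) (c : ℝ) :
    (1 / (n : ℝ)) * ∑ i, x i - c = (1 / (n : ℝ)) * ∑ i, (x i - c) := by
  have hn' : (n : ℝ) ≠ 0 := by positivity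
  rw [Finset.sum_sub_distrib]
  simp only [Finset.sum_const, Finset.card_univ, Fintype.card_fin, nsmul_eq_mul]
  field_simp

lemma integral_mem_Icc_zero_one {α : Type*} [MeasurableSpace α] {ν : Measure α}
    [IsProbabilityMeasure ν] {f : α → ℝ} (hf : ∀ x, f x ∈ Icc (0 : ℝ) 1) :
    ∫ x, f x ∂ν ∈ Icc (0 : ℝ) 1 := by
  refine ⟨integral_nonneg fun x => (hf x).1, (le_abs_self _).trans ?_⟩
  simpa using norm_integral_le_of_norm_le_const (μ := ν) (f := f) (C := 1)
    (ae_of_all _ fun x => abs_le.mpr ⟨by linarith [(hf x).1], (hf x).2⟩)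

lemma sq_coe_toNNReal_le (x : ℝ) : (x.toNNReal : ℝ) ^ 2 ≤ x ^ 2 := by
  rw [Real.coe_toNNReal']
  rcases le_total x 0 with hx | hx <;> simp [hx, sq_nonneg]

lemma one_div_add_one_div_le_two_div_min {a b : ℝ} (ha : 0 < a) (hb : 0 < b) :
    1 / a + 1 / b ≤ 2 / min a b := by
  have hmin : 0 < min a b := lt_min ha hb
  have ha' := one_div_le_one_div_of_le hmin (min_le_left a b)
  have hb' := one_div_le_one_div_of_le hmin (min_le_right a b)
  linarith [show 2 / min a b = 1 / min a b + 1 / min a b by ring]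

lemma sub_mem_Icc_neg_one_one {a b : ℝ} (ha : a ∈ Icc (0 : ℝ) 1) (hb : b ∈ Icc (0 : ℝ) 1) :
    a - b ∈ Icc (-1 : ℝ) 1 :=
  ⟨by linarith [ha.1, hb.2], by linarith [ha.2, hb.1]⟩

lemma LipschitzWith.mem_Icc_of_mem_Icc_neg_one_one {H : ℝ → ℝ} {K : ℝ≥0}
    (hH : LipschitzWith K H) {x : ℝ} (hx : x ∈ Icc (-1 : ℝ) 1) :
    H x ∈ Icc (H 0 - K) (H 0 + K) := by
  have h := hH.dist_le_mul x 0
  rw [Real.dist_eq, Real.dist_eq, sub_zero] at h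
  have : |H x - H 0| ≤ K := h.trans (mul_le_of_le_one_right K.2 (abs_le.mpr hx))
  exact ⟨by linarith [neg_abs_le (H x - H 0)], by linarith [le_abs_self (H x - H 0)]⟩

lemma LipschitzWith.sq_sub_le {H : ℝ → ℝ} {K : ℝ≥0} (hH : LipschitzWith K H) (x y : ℝ) :
    (H x - H y) ^ 2 ≤ K ^ 2 * (x - y) ^ 2 := by
  have h := hH.dist_le_mul x y
  rw [Real.dist_eq, Real.dist_eq] at h
  calc (H x - H y) ^ 2 = |H x - H y| ^ 2 := (sq_abs _).symm
    _ ≤ (K * |x - y|) ^ 2 := by gcongr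
    _ = K ^ 2 * (x - y) ^ 2 := by rw [mul_pow, sq_abs]

section SecondMoments

variable {Ω : Type*} [MeasurableSpace Ω] {P : Measure Ω}

lemma integral_sq_add_le {X Y : Ω → ℝ} (hX : MemLp X 2 P) (hY : MemLp Y 2 P) :
    ∫ ω, (X ω + Y ω) ^ 2 ∂P ≤ 2 * ∫ ω, X ω ^ 2 ∂P + 2 * ∫ ω, Y ω ^ 2 ∂P := by
  have hX2 := hX.integrable_sq.const_mul 2
  have hY2 := hY.integrable_sq.const_mul 2
  rw [← integral_const_mul, ← integral_const_mul, ← integral_add hX2 hY2]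
  refine integral_mono_of_nonneg (ae_of_all _ fun ω => sq_nonneg _) (hX2.add hY2)
    (ae_of_all _ fun ω => ?_)
  nlinarith [sq_nonneg (X ω - Y ω)]

lemma integral_sq_average_le {ι : Type*} [Fintype ι] [Nonempty ι] {X : ι → Ω → ℝ} {σ : ℝ}
    (hX : ∀ i, MemLp (X i) 2 P) (hσ : ∀ i, ∫ ω, X i ω ^ 2 ∂P ≤ σ) :
    ∫ ω, ((1 / (Fintype.card ι : ℝ)) * ∑ i, X i ω) ^ 2 ∂P ≤ σ := by
  have hn : (0 : ℝ) < Fintype.card ι := by exact_mod_cast Fintype.card_pos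
  have hX2 : ∀ i, Integrable (fun ω => X i ω ^ 2) P := fun i => (hX i).integrable_sq
  calc ∫ ω, ((1 / (Fintype.card ι : ℝ)) * ∑ i, X i ω) ^ 2 ∂P
      ≤ ∫ ω, (1 / (Fintype.card ι : ℝ)) * ∑ i, X i ω ^ 2 ∂P := by
        refine integral_mono_of_nonneg (ae_of_all _ fun ω => sq_nonneg _)
          ((integrable_finsetSum _ fun i _ => hX2 i).const_mul _) (ae_of_all _ fun ω => ?_)
        have := sq_sum_le_card_mul_sum_sq (s := Finset.univ) (f := fun i => X i ω)
        rw [Finset.card_univ] at this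
        calc ((1 / (Fintype.card ι : ℝ)) * ∑ i, X i ω) ^ 2
            = (1 / (Fintype.card ι : ℝ)) ^ 2 * (∑ i, X i ω) ^ 2 := mul_pow _ _ _
          _ ≤ (1 / (Fintype.card ι : ℝ)) ^ 2 * (Fintype.card ι * ∑ i, X i ω ^ 2) := by gcongr
          _ = (1 / (Fintype.card ι : ℝ)) * ∑ i, X i ω ^ 2 := by field_simp
    _ = (1 / (Fintype.card ι : ℝ)) * ∑ i, ∫ ω, X i ω ^ 2 ∂P := by
        rw [integral_const_mul, integral_finsetSum _ fun i _ => hX2 i]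
    _ ≤ (1 / (Fintype.card ι : ℝ)) * ∑ _i : ι, σ := by gcongr with i; exact hσ i
    _ = σ := by simp [hn.ne']

lemma integral_sq_average_le_of_orthogonal {ι : Type*} [Fintype ι] {ξ : ι → Ω → ℝ} {σ : ℝ}
    (hξ : ∀ i, MemLp (ξ i) 2 P) (horth : Pairwise fun i j => ∫ ω, ξ i ω * ξ j ω ∂P = 0)
    (hσ : ∀ i, ∫ ω, ξ i ω ^ 2 ∂P ≤ σ) :
    ∫ ω, ((1 / (Fintype.card ι : ℝ)) * ∑ i, ξ i ω) ^ 2 ∂P ≤ σ / Fintype.card ι := by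
  have hint : ∀ i j, Integrable (fun ω => ξ i ω * ξ j ω) P :=
    fun i j => (hξ i).integrable_mul (hξ j)
  have hsum : ∫ ω, (∑ i, ξ i ω) ^ 2 ∂P = ∑ i, ∫ ω, ξ i ω ^ 2 ∂P := by
    simp_rw [sq, Finset.sum_mul_sum]
    rw [integral_finsetSum _ fun i _ => integrable_finsetSum _ fun j _ => hint i j]
    refine Finset.sum_congr rfl fun i _ => ?_
    rw [integral_finsetSum _ fun j _ => hint i j,
      Finset.sum_eq_single i (fun j _ hji => horth hji.symm) (by simp)]
  calc ∫ ω, ((1 / (Fintype.card ι : ℝ)) * ∑ i, ξ i ω) ^ 2 ∂P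
      = (1 / (Fintype.card ι : ℝ)) ^ 2 * ∑ i, ∫ ω, ξ i ω ^ 2 ∂P := by
        simp_rw [mul_pow]; rw [integral_const_mul, hsum]
    _ ≤ (1 / (Fintype.card ι : ℝ)) ^ 2 * ∑ _i : ι, σ := by gcongr with i; exact hσ i
    _ = σ / Fintype.card ι := by
        rcases eq_or_ne (Fintype.card ι : ℝ) 0 with h | h
        · simp [h]
        · simp only [Finset.sum_const, Finset.card_univ, nsmul_eq_mul]; field_simp

end SecondMoments

lemma ProbabilityTheory.iIndepFun.map_prodMk_prodMk {Ω κ β : Type*} [MeasurableSpace Ω]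
    [MeasurableSpace β] {P : Measure Ω} [IsFiniteMeasure P] {f : κ → Ω → β}
    (hf : iIndepFun f P) (hfm : ∀ k, Measurable (f k)) {a b c : κ}
    (hab : a ≠ b) (hac : a ≠ c) (hbc : b ≠ c) :
    P.map (fun ω => ((f a ω, f b ω), f c ω))
      = ((P.map (f a)).prod (P.map (f b))).prod (P.map (f c)) := by
  rw [(indepFun_iff_map_prod_eq_prod_map_map ((hfm a).prodMk (hfm b)).aemeasurable
      (hfm c).aemeasurable).mp (hf.indepFun_prodMk hfm a b c hac hbc),
    (indepFun_iff_map_prod_eq_prod_map_map (hfm a).aemeasurable (hfm b).aemeasurable).mp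
      (hf.indepFun hab)]

lemma integral_prod_prod_mul_eq_zero {α β : Type*} [MeasurableSpace α] [MeasurableSpace β]
    {ν : Measure α} {μ : Measure β} [SFinite ν] [SFinite μ] {φ : α → β → ℝ}
    (hφ : Integrable (fun p : (α × α) × β => φ p.1.1 p.2 * φ p.1.2 p.2) ((ν.prod ν).prod μ))
    (hcentred : ∀ y, ∫ x, φ x y ∂ν = 0) :
    ∫ p : (α × α) × β, φ p.1.1 p.2 * φ p.1.2 p.2 ∂((ν.prod ν).prod μ) = 0 := by
  have hinner : ∀ y, ∫ x : α × α, φ x.1 y * φ x.2 y ∂(ν.prod ν) = 0 := fun y => by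
    rw [integral_prod_mul (fun x => φ x y) (fun x => φ x y), hcentred, zero_mul]
  simp [integral_prod_symm _ hφ, hinner]

section MonteCarlo

variable {Ω : Type*} [MeasurableSpace Ω] {P : Measure Ω} [IsProbabilityMeasure P]

lemma integral_sq_empirical_mean_sub_le {α β : Type*} [MeasurableSpace α] [MeasurableSpace β]
    {f : α → β → ℝ} (hf : Measurable (uncurry f)) (hf01 : ∀ x y, f x y ∈ Icc (0 : ℝ) 1)
    {ν : Measure α} [IsProbabilityMeasure ν] {m : ℕ} (hm : 0 < m)
    {Z : Fin m → Ω → α} {Y : Ω → β} (hZ : ∀ i, Measurable (Z i)) (hY : Measurable Y)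
    (hlaw : Pairwise fun i i' =>
      P.map (fun ω => ((Z i ω, Z i' ω), Y ω)) = (ν.prod ν).prod (P.map Y)) :
    ∫ ω, ((1 / (m : ℝ)) * ∑ i, f (Z i ω) (Y ω) - ∫ x, f x (Y ω) ∂ν) ^ 2 ∂P ≤ 1 / (m : ℝ) := by
  set q : β → ℝ := fun y => ∫ x, f x y ∂ν
  have hq : Measurable q := hf.stronglyMeasurable.integral_prod_left.measurable
  set φ : α → β → ℝ := fun x y => f x y - q y
  have hφ : Measurable (uncurry φ) := hf.sub (hq.comp measurable_snd)
  have hφ1 : ∀ x y, |φ x y| ≤ 1 := fun x y =>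
    abs_le.mpr (sub_mem_Icc_neg_one_one (hf01 x y) (integral_mem_Icc_zero_one (hf01 · y)))
  have hcentred : ∀ y, ∫ x, φ x y ∂ν = 0 := fun y => by
    have hint : Integrable (f · y) ν :=
      .of_bound (hf.comp (measurable_id.prodMk measurable_const)).aestronglyMeasurable 1
        (ae_of_all _ fun x => abs_le.mpr ⟨by linarith [(hf01 x y).1], (hf01 x y).2⟩)
    simp [φ, integral_sub hint (integrable_const _), q]
  have hξ : ∀ i, MemLp (fun ω => φ (Z i ω) (Y ω)) 2 P := fun i =>
    .of_bound (hφ.comp ((hZ i).prodMk hY)).aestronglyMeasurable 1 (ae_of_all _ fun ω => hφ1 _ _)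
  have horth : Pairwise fun i i' =>
      ∫ ω, φ (Z i ω) (Y ω) * φ (Z i' ω) (Y ω) ∂P = 0 := fun i i' hii' => by
    have hΦ : Measurable fun p : (α × α) × β => φ p.1.1 p.2 * φ p.1.2 p.2 :=
      (hφ.comp (measurable_fst.fst.prodMk measurable_snd)).mul
        (hφ.comp (measurable_fst.snd.prodMk measurable_snd))
    have := integral_prod_prod_mul_eq_zero (μ := P.map Y)
      (Integrable.of_bound hΦ.aestronglyMeasurable 1 (ae_of_all _ fun p => by
        simpa [abs_mul] using mul_le_one₀ (hφ1 _ _) (abs_nonneg _) (hφ1 _ _))) hcentred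
    rwa [← hlaw hii', integral_map (((hZ i).prodMk (hZ i')).prodMk hY).aemeasurable
      hΦ.aestronglyMeasurable] at this
  have hdiag : ∀ i, ∫ ω, φ (Z i ω) (Y ω) ^ 2 ∂P ≤ 1 := fun i => by
    refine (integral_mono_of_nonneg (ae_of_all _ fun ω => sq_nonneg _) (integrable_const 1)
      (ae_of_all _ fun ω => ?_)).trans (by simp)
    exact (sq_le_one_iff_abs_le_one _).mpr (hφ1 _ _)
  have hrw : ∀ ω, (1 / (m : ℝ)) * ∑ i, f (Z i ω) (Y ω) - ∫ x, f x (Y ω) ∂ν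
      = (1 / (m : ℝ)) * ∑ i, φ (Z i ω) (Y ω) := fun ω => one_div_mul_sum_sub hm _ _
  simp_rw [hrw]
  simpa using integral_sq_average_le_of_orthogonal hξ horth hdiag

lemma integral_sq_sample_mean_sub_le {β : Type*} [MeasurableSpace β] {μ : Measure β}
    [IsProbabilityMeasure μ] {g : β → ℝ} (hg : Measurable g) {a b : ℝ}
    (hgab : ∀ y, g y ∈ Icc a b) {T : ℕ} (hT : 0 < T) {t : Fin T → Ω → β}
    (ht : ∀ j, Measurable (t j)) (hlaw : ∀ j, P.map (t j) = μ)
    (hindep : Pairwise fun j j' => IndepFun (t j) (t j') P) :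
    ∫ ω, ((1 / (T : ℝ)) * ∑ j, g (t j ω) - ∫ y, g y ∂μ) ^ 2 ∂P ≤ ((b - a) / 2) ^ 2 / T := by
  set I := ∫ y, g y ∂μ
  have hg' : Measurable fun y => g y - I := hg.sub measurable_const
  have hmap : ∀ j (F : β → ℝ), Measurable F → ∫ ω, F (t j ω) ∂P = ∫ y, F y ∂μ :=
    fun j F hF => by
      rw [← hlaw j]; exact (integral_map (ht j).aemeasurable hF.aestronglyMeasurable).symm
  have hmean : ∀ j, ∫ ω, (g (t j ω) - I) ∂P = 0 := fun j => by
    have hint : Integrable g μ :=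
      (memLp_of_bounded (ae_of_all _ hgab) hg.aestronglyMeasurable 1).integrable le_rfl
    calc ∫ ω, (g (t j ω) - I) ∂P = ∫ y, (g y - I) ∂μ := hmap j _ hg'
      _ = 0 := by simp [integral_sub hint (integrable_const I), I]
  have hξ : ∀ j, MemLp (fun ω => g (t j ω) - I) 2 P := fun j =>
    memLp_of_bounded (ae_of_all _ fun ω => show g (t j ω) - I ∈ Icc (a - I) (b - I) from
        ⟨by linarith [(hgab (t j ω)).1], by linarith [(hgab (t j ω)).2]⟩)
      (hg'.comp (ht j)).aestronglyMeasurable 2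
  have horth : Pairwise fun j j' =>
      ∫ ω, (g (t j ω) - I) * (g (t j' ω) - I) ∂P = 0 := fun j j' hjj' =>
    (((hindep hjj').comp hg' hg').integral_fun_mul_eq_mul_integral
      (hξ j).aestronglyMeasurable (hξ j').aestronglyMeasurable).trans
      (by simp only [Function.comp_def, hmean, zero_mul])
  have hdiag : ∀ j, ∫ ω, (g (t j ω) - I) ^ 2 ∂P ≤ ((b - a) / 2) ^ 2 := fun j => by
    calc ∫ ω, (g (t j ω) - I) ^ 2 ∂P = ∫ y, (g y - I) ^ 2 ∂μ := hmap j _ (hg'.pow_const 2)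
      _ = Var[g; μ] := (variance_eq_integral hg.aemeasurable).symm
      _ ≤ ((b - a) / 2) ^ 2 := variance_le_sq_of_bounded (ae_of_all _ hgab) hg.aemeasurable
  simp_rw [one_div_mul_sum_sub hT]
  simpa using integral_sq_average_le_of_orthogonal hξ horth hdiag

end MonteCarlo

section Estimator

variable {Ω : Type*} [MeasurableSpace Ω] {P : Measure Ω}

lemma memLp_sub_of_mem_Icc_zero_one [IsFiniteMeasure P] {X Y : Ω → ℝ} (hX : Measurable X)
    (hY : Measurable Y) (hX1 : ∀ ω, X ω ∈ Icc (0 : ℝ) 1) (hY1 : ∀ ω, Y ω ∈ Icc (0 : ℝ) 1)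
    (p : ℝ≥0∞) : MemLp (fun ω => X ω - Y ω) p P :=
  memLp_of_bounded (ae_of_all _ fun ω => sub_mem_Icc_neg_one_one (hX1 ω) (hY1 ω))
    (hX.sub hY).aestronglyMeasurable p

lemma LipschitzWith.integral_sq_comp_sub_sub_le {H : ℝ → ℝ} {K : ℝ≥0} (hH : LipschitzWith K H)
    {X₀ X₁ Y₀ Y₁ : Ω → ℝ} (h₀ : MemLp (fun ω => X₀ ω - Y₀ ω) 2 P)
    (h₁ : MemLp (fun ω => X₁ ω - Y₁ ω) 2 P) :
    ∫ ω, (H (X₁ ω - X₀ ω) - H (Y₁ ω - Y₀ ω)) ^ 2 ∂P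
      ≤ 2 * K ^ 2 * (∫ ω, (X₁ ω - Y₁ ω) ^ 2 ∂P + ∫ ω, (X₀ ω - Y₀ ω) ^ 2 ∂P) := by
  calc ∫ ω, (H (X₁ ω - X₀ ω) - H (Y₁ ω - Y₀ ω)) ^ 2 ∂P
      ≤ ∫ ω, K ^ 2 * ((X₁ ω - Y₁ ω) + -(X₀ ω - Y₀ ω)) ^ 2 ∂P :=
        integral_mono_of_nonneg (ae_of_all _ fun ω => sq_nonneg _)
          ((h₁.add h₀.neg).integrable_sq.const_mul _)
          (ae_of_all _ fun ω => (hH.sq_sub_le _ _).trans_eq (by ring_nf))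
    _ = K ^ 2 * ∫ ω, ((X₁ ω - Y₁ ω) + -(X₀ ω - Y₀ ω)) ^ 2 ∂P := integral_const_mul _ _
    _ ≤ K ^ 2 * (2 * ∫ ω, (X₁ ω - Y₁ ω) ^ 2 ∂P + 2 * ∫ ω, (-(X₀ ω - Y₀ ω)) ^ 2 ∂P) := by
        gcongr; exact integral_sq_add_le h₁ h₀.neg
    _ = 2 * K ^ 2 * (∫ ω, (X₁ ω - Y₁ ω) ^ 2 ∂P + ∫ ω, (X₀ ω - Y₀ ω) ^ 2 ∂P) := by
        simp only [neg_sq]; ring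

lemma integral_sq_average_lipschitz_sub_le [IsProbabilityMeasure P] {H : ℝ → ℝ} {K : ℝ≥0}
    (hH : LipschitzWith K H) {β : Type*} [MeasurableSpace β] {μ : Measure β}
    [IsProbabilityMeasure μ] {q₀ q₁ : β → ℝ} (hq₀ : Measurable q₀) (hq₁ : Measurable q₁)
    (hq₀1 : ∀ s, q₀ s ∈ Icc (0 : ℝ) 1) (hq₁1 : ∀ s, q₁ s ∈ Icc (0 : ℝ) 1)
    {T : ℕ} (hT : 0 < T) {t : Fin T → Ω → β} (ht : ∀ j, Measurable (t j))
    (hlaw : ∀ j, P.map (t j) = μ) (hindep : Pairwise fun j j' => IndepFun (t j) (t j') P)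
    {S₀ S₁ : Fin T → Ω → ℝ} (hS₀ : ∀ j, Measurable (S₀ j)) (hS₁ : ∀ j, Measurable (S₁ j))
    (hS₀1 : ∀ j ω, S₀ j ω ∈ Icc (0 : ℝ) 1) (hS₁1 : ∀ j ω, S₁ j ω ∈ Icc (0 : ℝ) 1)
    {ε₀ ε₁ : ℝ} (hε₀ : ∀ j, ∫ ω, (S₀ j ω - q₀ (t j ω)) ^ 2 ∂P ≤ ε₀)
    (hε₁ : ∀ j, ∫ ω, (S₁ j ω - q₁ (t j ω)) ^ 2 ∂P ≤ ε₁) :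
    ∫ ω, ((1 / (T : ℝ)) * ∑ j, H (S₁ j ω - S₀ j ω) - ∫ s, H (q₁ s - q₀ s) ∂μ) ^ 2 ∂P
      ≤ 4 * K ^ 2 * (ε₀ + ε₁) + 2 * (K : ℝ) ^ 2 / T := by
  have : Nonempty (Fin T) := ⟨⟨0, hT⟩⟩
  have hHm : Measurable H := hH.continuous.measurable
  set g : β → ℝ := fun s => H (q₁ s - q₀ s)
  set I := ∫ s, g s ∂μ
  have hg : Measurable g := hHm.comp (hq₁.sub hq₀)
  have hgK : ∀ s, g s ∈ Icc (H 0 - K) (H 0 + K) := fun s =>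
    hH.mem_Icc_of_mem_Icc_neg_one_one (sub_mem_Icc_neg_one_one (hq₁1 s) (hq₀1 s))
  have hSK : ∀ j ω, H (S₁ j ω - S₀ j ω) ∈ Icc (H 0 - K) (H 0 + K) := fun j ω =>
    hH.mem_Icc_of_mem_Icc_neg_one_one (sub_mem_Icc_neg_one_one (hS₁1 j ω) (hS₀1 j ω))
  have hgt : ∀ j, MemLp (fun ω => g (t j ω)) 2 P := fun j =>
    memLp_of_bounded (ae_of_all _ fun ω => hgK (t j ω)) (hg.comp (ht j)).aestronglyMeasurable 2
  have hD : ∀ j, MemLp (fun ω => H (S₁ j ω - S₀ j ω) - g (t j ω)) 2 P := fun j =>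
    (memLp_of_bounded (ae_of_all _ fun ω => hSK j ω)
      (hHm.comp ((hS₁ j).sub (hS₀ j))).aestronglyMeasurable 2).sub (hgt j)
  have hD2 : ∀ j, ∫ ω, (H (S₁ j ω - S₀ j ω) - g (t j ω)) ^ 2 ∂P ≤ 2 * K ^ 2 * (ε₀ + ε₁) :=
    fun j => (hH.integral_sq_comp_sub_sub_le
      (memLp_sub_of_mem_Icc_zero_one (hS₀ j) (hq₀.fun_comp (ht j)) (hS₀1 j) (hq₀1 <| t j ·) 2)
      (memLp_sub_of_mem_Icc_zero_one (hS₁ j) (hq₁.fun_comp (ht j)) (hS₁1 j) (hq₁1 <| t j ·) 2)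
      ).trans (mul_le_mul_of_nonneg_left (by linarith [hε₀ j, hε₁ j]) (by positivity))
  have hV : ∫ ω, ((1 / (T : ℝ)) * ∑ j, g (t j ω) - I) ^ 2 ∂P ≤ (K : ℝ) ^ 2 / T :=
    (integral_sq_sample_mean_sub_le hg hgK hT ht hlaw hindep).trans_eq (by ring)
  have hsplit : ∀ ω, (1 / (T : ℝ)) * ∑ j, H (S₁ j ω - S₀ j ω) - I
      = (1 / (T : ℝ)) * ∑ j, (H (S₁ j ω - S₀ j ω) - g (t j ω))
        + ((1 / (T : ℝ)) * ∑ j, g (t j ω) - I) := fun ω => by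
    rw [Finset.sum_sub_distrib]; ring
  calc ∫ ω, ((1 / (T : ℝ)) * ∑ j, H (S₁ j ω - S₀ j ω) - I) ^ 2 ∂P
      ≤ 2 * ∫ ω, ((1 / (T : ℝ)) * ∑ j, (H (S₁ j ω - S₀ j ω) - g (t j ω))) ^ 2 ∂P
        + 2 * ∫ ω, ((1 / (T : ℝ)) * ∑ j, g (t j ω) - I) ^ 2 ∂P := by
        simp_rw [hsplit]
        exact integral_sq_add_le ((memLp_finsetSum _ fun j _ => hD j).const_mul _)
          (((memLp_finsetSum _ fun j _ => hgt j).const_mul _).sub (memLp_const I))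
    _ ≤ 2 * (2 * K ^ 2 * (ε₀ + ε₁)) + 2 * ((K : ℝ) ^ 2 / T) := by
        gcongr
        simpa using integral_sq_average_le hD hD2
    _ = 4 * K ^ 2 * (ε₀ + ε₁) + 2 * (K : ℝ) ^ 2 / T := by ring

end Estimator

theorem integral_sq_relaxed_estimator_sub_le {Ω : Type*} [MeasurableSpace Ω] {P : Measure Ω}
    [IsProbabilityMeasure P] {H : ℝ → ℝ} {K : ℝ≥0} (hH : LipschitzWith K H)
    {μ ν0 ν1 : Measure ℝ} [IsProbabilityMeasure μ] [IsProbabilityMeasure ν0]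
    [IsProbabilityMeasure ν1] {r : ℝ → ℝ} (hrm : Measurable r) (hr01 : ∀ z, r z ∈ Icc (0 : ℝ) 1)
    {m0 m1 T : ℕ} (hm0 : 0 < m0) (hm1 : 0 < m1) (hT : 0 < T)
    {Z0 : Fin m0 → Ω → ℝ} {Z1 : Fin m1 → Ω → ℝ} {ts : Fin T → Ω → ℝ}
    (hZ0m : ∀ i, Measurable (Z0 i)) (hZ1m : ∀ i, Measurable (Z1 i))
    (htsm : ∀ j, Measurable (ts j))
    (hlaw0 : ∀ i, P.map (Z0 i) = ν0) (hlaw1 : ∀ i, P.map (Z1 i) = ν1)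
    (hlawt : ∀ j, P.map (ts j) = μ) (hindep : iIndepFun (Sum.elim Z0 (Sum.elim Z1 ts)) P) :
    ∫ ω, ((1 / (T : ℝ)) * ∑ j, H ((1 / (m1 : ℝ)) * ∑ i, r (Z1 i ω - ts j ω)
            - (1 / (m0 : ℝ)) * ∑ i, r (Z0 i ω - ts j ω))
          - ∫ t, H (∫ z, r (z - t) ∂ν1 - ∫ z, r (z - t) ∂ν0) ∂μ) ^ 2 ∂P
      ≤ 4 * K ^ 2 * (1 / (m0 : ℝ) + 1 / (m1 : ℝ)) + 2 * (K : ℝ) ^ 2 / T := by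
  have hr : Measurable (uncurry fun z t : ℝ => r (z - t)) :=
    hrm.comp (measurable_fst.sub measurable_snd)
  have hq : ∀ (ν : Measure ℝ) [SFinite ν], Measurable fun t => ∫ z, r (z - t) ∂ν := fun ν _ =>
    hr.stronglyMeasurable.integral_prod_left.measurable
  have hfm : ∀ k, Measurable (Sum.elim Z0 (Sum.elim Z1 ts) k) := by
    rintro (i | i | j) <;> simp [*]
  refine integral_sq_average_lipschitz_sub_le hH (hq ν0) (hq ν1)
    (fun t => integral_mem_Icc_zero_one fun z => hr01 _)
    (fun t => integral_mem_Icc_zero_one fun z => hr01 _) hT htsm hlawt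
    (fun j j' hjj' => hindep.indepFun (i := .inr (.inr j)) (j := .inr (.inr j')) (by simpa))
    (fun j => by fun_prop) (fun j => by fun_prop)
    (fun j ω => one_div_mul_sum_mem_Icc hm0 fun i => hr01 _)
    (fun j ω => one_div_mul_sum_mem_Icc hm1 fun i => hr01 _) (fun j => ?_) (fun j => ?_)
  · refine integral_sq_empirical_mean_sub_le hr (fun _ _ => hr01 _) hm0 hZ0m (htsm j)
      fun i i' hii' => ?_
    simpa [hlaw0] using hindep.map_prodMk_prodMk hfm (a := .inl i) (b := .inl i')
      (c := .inr (.inr j)) (by simpa using hii') (by simp) (by simp)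
  · refine integral_sq_empirical_mean_sub_le hr (fun _ _ => hr01 _) hm1 hZ1m (htsm j)
      fun i i' hii' => ?_
    simpa [hlaw1] using hindep.map_prodMk_prodMk hfm (a := .inr (.inl i)) (b := .inr (.inl i'))
      (c := .inr (.inr j)) (by simpa using hii') (by simp) (by simp)

theorem stmt_3_general {Ω : Type*} [MeasurableSpace Ω] (P : MeasureTheory.Measure Ω)
    [MeasureTheory.IsProbabilityMeasure P]
    (h : ℝ → ℝ) (C_h : ℝ)
    (hLip : LipschitzOnWith (Real.toNNReal C_h) h (Set.Icc (-1 : ℝ) 1))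
    (μ ν0 ν1 : MeasureTheory.Measure ℝ)
    [MeasureTheory.IsProbabilityMeasure μ]
    [MeasureTheory.IsProbabilityMeasure ν0] [MeasureTheory.IsProbabilityMeasure ν1]
    (r : ℝ → ℝ) (hrm : Measurable r)
    (hr01 : ∀ z, r z ∈ Set.Icc (0 : ℝ) 1)
    (m0 m1 T : ℕ) (hm0 : 0 < m0) (hm1 : 0 < m1) (hT : 0 < T)
    (Z0 : Fin m0 → Ω → ℝ) (Z1 : Fin m1 → Ω → ℝ) (ts : Fin T → Ω → ℝ)
    (hZ0m : ∀ i, Measurable (Z0 i)) (hZ1m : ∀ i, Measurable (Z1 i))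
    (htsm : ∀ j, Measurable (ts j))
    (hlaw0 : ∀ i, P.map (Z0 i) = ν0) (hlaw1 : ∀ i, P.map (Z1 i) = ν1)
    (hlawt : ∀ j, P.map (ts j) = μ)
    (hindep : ProbabilityTheory.iIndepFun
      (Sum.elim Z0 (Sum.elim Z1 ts)) P) :
    ∫ ω, ((1 / (T : ℝ)) * ∑ j : Fin T,
            h ((1 / (m1 : ℝ)) * ∑ i : Fin m1, r (Z1 i ω - ts j ω)
              - (1 / (m0 : ℝ)) * ∑ i : Fin m0, r (Z0 i ω - ts j ω))
          - ∫ t, h (relaxedCDF r ν0 t - relaxedCDF r ν1 t) ∂μ) ^ 2 ∂P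
      ≤ 8 * C_h ^ 2 / min (m0 : ℝ) (m1 : ℝ) + 2 * C_h ^ 2 / (T : ℝ) := by
  obtain ⟨H, hH, hhH⟩ := hLip.extend_real
  have hB : ∀ t, h (relaxedCDF r ν0 t - relaxedCDF r ν1 t)
      = H (∫ z, r (z - t) ∂ν1 - ∫ z, r (z - t) ∂ν0) := fun t => by
    rw [relaxedCDF_sub_relaxedCDF]
    exact hhH (sub_mem_Icc_neg_one_one (integral_mem_Icc_zero_one fun z => hr01 _)
      (integral_mem_Icc_zero_one fun z => hr01 _))
  have hBemp : ∀ j ω, h ((1 / (m1 : ℝ)) * ∑ i, r (Z1 i ω - ts j ω)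
      - (1 / (m0 : ℝ)) * ∑ i, r (Z0 i ω - ts j ω))
      = H ((1 / (m1 : ℝ)) * ∑ i, r (Z1 i ω - ts j ω)
      - (1 / (m0 : ℝ)) * ∑ i, r (Z0 i ω - ts j ω)) := fun j ω =>
    hhH (sub_mem_Icc_neg_one_one (one_div_mul_sum_mem_Icc hm1 fun i => hr01 _)
      (one_div_mul_sum_mem_Icc hm0 fun i => hr01 _))
  have hK := sq_coe_toNNReal_le C_h
  have hmin := one_div_add_one_div_le_two_div_min (a := m0) (b := m1)
    (by exact_mod_cast hm0) (by exact_mod_cast hm1)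
  simp_rw [hB, hBemp]
  refine (integral_sq_relaxed_estimator_sub_le hH hrm hr01 hm0 hm1 hT hZ0m hZ1m htsm
    hlaw0 hlaw1 hlawt hindep).trans ?_
  calc 4 * (Real.toNNReal C_h : ℝ) ^ 2 * (1 / (m0 : ℝ) + 1 / (m1 : ℝ))
        + 2 * (Real.toNNReal C_h : ℝ) ^ 2 / T
      ≤ 4 * C_h ^ 2 * (2 / min (m0 : ℝ) (m1 : ℝ)) + 2 * C_h ^ 2 / T := by gcongr
    _ = 8 * C_h ^ 2 / min (m0 : ℝ) (m1 : ℝ) + 2 * C_h ^ 2 / (T : ℝ) := by ring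

/-- **Monte Carlo estimator bound.** For `h` Lipschitz with constant `C_h`
on `[-1,1]`, i.i.d. samples from `ν0`, `ν1` and thresholds from `μ` (all mutually
independent), the mean squared error of the Monte Carlo estimator of
`∫ h(B_s(t)) μ(dt)` is at most `8 C_h² / min(m0,m1) + 2 C_h² / T`. -/
theorem stmt_3 {Ω : Type*} [MeasurableSpace Ω] (P : MeasureTheory.Measure Ω)
    [MeasureTheory.IsProbabilityMeasure P]
    (h : ℝ → ℝ) (C_h : ℝ) (hC : 0 ≤ C_h)
    (hLip : LipschitzOnWith (Real.toNNReal C_h) h (Set.Icc (-1 : ℝ) 1))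
    (hpos : ∀ x ∈ Set.Icc (-1 : ℝ) 1, 0 ≤ h x)
    (μ ν0 ν1 : MeasureTheory.Measure ℝ)
    [MeasureTheory.IsProbabilityMeasure μ]
    [MeasureTheory.IsProbabilityMeasure ν0] [MeasureTheory.IsProbabilityMeasure ν1]
    (r : ℝ → ℝ) (hrm : Measurable r) (hrmono : Monotone r)
    (hr01 : ∀ z, r z ∈ Set.Icc (0 : ℝ) 1)
    (m0 m1 T : ℕ) (hm0 : 0 < m0) (hm1 : 0 < m1) (hT : 0 < T)
    (Z0 : Fin m0 → Ω → ℝ) (Z1 : Fin m1 → Ω → ℝ) (ts : Fin T → Ω → ℝ)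
    (hZ0m : ∀ i, Measurable (Z0 i)) (hZ1m : ∀ i, Measurable (Z1 i))
    (htsm : ∀ j, Measurable (ts j))
    (hlaw0 : ∀ i, P.map (Z0 i) = ν0) (hlaw1 : ∀ i, P.map (Z1 i) = ν1)
    (hlawt : ∀ j, P.map (ts j) = μ)
    (hindep : ProbabilityTheory.iIndepFun
      (Sum.elim Z0 (Sum.elim Z1 ts)) P) :
    ∫ ω, ((1 / (T : ℝ)) * ∑ j : Fin T,
            h ((1 / (m1 : ℝ)) * ∑ i : Fin m1, r (Z1 i ω - ts j ω)
              - (1 / (m0 : ℝ)) * ∑ i : Fin m0, r (Z0 i ω - ts j ω))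
          - ∫ t, h (relaxedCDF r ν0 t - relaxedCDF r ν1 t) ∂μ) ^ 2 ∂P
      ≤ 8 * C_h ^ 2 / min (m0 : ℝ) (m1 : ℝ) + 2 * C_h ^ 2 / (T : ℝ) :=
  stmt_3_general P h C_h hLip μ ν0 ν1 r hrm hr01 m0 m1 T hm0 hm1 hT Z0 Z1 ts hZ0m hZ1m htsm hlaw0
    hlaw1 hlawt hindep
end

section
/- (Threshold-discrete estimator bound.) Let h : [−1,1] → [0,∞) be Lipschitz with constant C_h and maximum M_h := max_{a∈[−1,1]} h(a). Let ρ : [0,1] → [0,∞) be a Lipschitz probability density with Lipschitz constant C_ρ (so ∫_0^1 ρ = 1, hence ρ ≤ C_ρ + 1 on [0,1]). Let ν0, ν1 be Borel probability measures on ℝ, let r_s : ℝ → [0,1] be nondecreasing and Lipschitz on ℝ with Lip(r_s) ≤ s·C_r for some constant C_r > 0, and define F_k^{(s)}(t) := 1 − ∫ r_s(z−t) dν_k(z) and B_s(t) := F_0^{(s)}(t) − F_1^{(s)}(t). Let Z_0^{(1)},…,Z_0^{(m0)} be i.i.d. ∼ ν0 and Z_1^{(1)},…,Z_1^{(m1)}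 i.i.d. ∼ ν1, independent families, and define B̂(t) := (1/m1)Σ_i r_s(Z_1^{(i)} − t) − (1/m0)Σ_i r_s(Z_0^{(i)} − t). Let t_j = j/T, j = 0,…,T, be the uniform partition of [0,1]. Then, with C := (C_ρ+1)(2 s C_r C_h + M_h), E[( (1/T)Σ_{j=1}^T h(B̂(t_j)) ρ(t_j) − ∫_0^1 h(B_s(t)) ρ(t) dt )²] ≤ 8C_h²/min(m0,m1) + C²/(2T²). In particular, the estimation error tends to 0 in L²(P) as m0, m1, T → ∞ at rate O((1+s)/T) when T/(1+s) = c·√(min(m0,m1)) for a fixed constant c. -/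
/-!
Split the error over the cells `[j/T, (j+1)/T]` of the uniform partition. With the cell masses
`w_j = ∫ ρ` over them and `t_j = (j+1)/T`, the Lipschitz bounds on `ρ` and on `h ∘ B` give
`h(B̂(t_j)) ρ(t_j)/T - ∫ h(B) ρ = w_j (h(B̂(t_j)) - h(B(t_j))) + O(C_ρ M_h/T² + s C_r C_h w_j/T)`
on each cell; monotonicity of `r` makes both relaxed CDFs nondecreasing, so `B` is `s C_r`-Lipschitz
rather than `2 s C_r`-Lipschitz. The `w_j` are probability weights, so Jensen bounds the square of
the main term by `C_h² ∑ w_j (B̂(t_j) - B(t_j))²`.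
Finally `B̂(t)` is a weighted sum of the independent `[0, 1]`-valued variables `r(Z - t)` with mean
`B(t)`, so by Popoviciu's inequality its variance is at most `(1/m₀ + 1/m₁)/4`.
-/

open MeasureTheory Set ProbabilityTheory
open scoped NNReal

theorem abs_sub_mul_sub_integral_le {f : ℝ → ℝ} {K : ℝ≥0} {a b : ℝ} (hab : a ≤ b)
    (hf : LipschitzOnWith K f (Icc a b)) :
    |(b - a) * f b - ∫ t in a..b, f t| ≤ K * (b - a) ^ 2 / 2 := by
  have hfi : IntervalIntegrable f volume a b := hf.continuousOn.intervalIntegrable_of_Icc hab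
  have hlin : IntervalIntegrable (fun t => (K : ℝ) * (b - t)) volume a b := by
    apply Continuous.intervalIntegrable; fun_prop
  rw [← smul_eq_mul, ← intervalIntegral.integral_const,
    ← intervalIntegral.integral_sub intervalIntegrable_const hfi, ← Real.norm_eq_abs]
  calc ‖∫ t in a..b, (f b - f t)‖ ≤ ∫ t in a..b, (K : ℝ) * (b - t) := by
        refine intervalIntegral.norm_integral_le_of_norm_le hab (ae_of_all _ fun t ht => ?_) hlin
        have := hf.dist_le_mul b ⟨hab, le_rfl⟩ t ⟨ht.1.le, ht.2⟩
        rwa [Real.dist_eq, Real.dist_eq, abs_of_nonneg (sub_nonneg.2 ht.2)] at this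
    _ = K * (b - a) ^ 2 / 2 := by
        simp only [intervalIntegral.integral_const_mul, intervalIntegral.integral_sub
          intervalIntegrable_const intervalIntegral.intervalIntegrable_id,
          intervalIntegral.integral_const, integral_id, smul_eq_mul]
        ring

theorem abs_mul_integral_sub_integral_mul_le {φ ψ : ℝ → ℝ} {a b c δ : ℝ} (hab : a ≤ b)
    (hψ : IntervalIntegrable ψ volume a b)
    (hφψ : IntervalIntegrable (fun t => φ t * ψ t) volume a b)
    (hψ0 : ∀ t ∈ Ioc a b, 0 ≤ ψ t) (hφ : ∀ t ∈ Ioc a b, |c - φ t| ≤ δ) :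
    |c * (∫ t in a..b, ψ t) - ∫ t in a..b, φ t * ψ t| ≤ δ * ∫ t in a..b, ψ t := by
  rw [← intervalIntegral.integral_const_mul, ← intervalIntegral.integral_sub (hψ.const_mul c) hφψ,
    ← intervalIntegral.integral_const_mul, ← Real.norm_eq_abs]
  refine intervalIntegral.norm_integral_le_of_norm_le hab (ae_of_all _ fun t ht => ?_)
    (hψ.const_mul δ)
  rw [← sub_mul, Real.norm_eq_abs, abs_mul, abs_of_nonneg (hψ0 t ht)]
  exact mul_le_mul_of_nonneg_right (hφ t ht) (hψ0 t ht)

theorem Icc_uniformPartition_subset {T j : ℕ} (hj : j < T) :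
    Icc ((j : ℝ) / T) (((j : ℝ) + 1) / T) ⊆ Icc 0 1 := by
  have hj' : (j : ℝ) + 1 ≤ T := by exact_mod_cast hj
  exact Icc_subset_Icc (by positivity) ((div_le_one (by linarith)).2 hj')

theorem sum_integral_uniformPartition {f : ℝ → ℝ} (hf : IntervalIntegrable f volume 0 1)
    {T : ℕ} (hT : 0 < T) :
    ∑ j ∈ Finset.range T, ∫ t in (j : ℝ) / T..((j : ℝ) + 1) / T, f t = ∫ t in (0 : ℝ)..1, f t := by
  have hT' : (T : ℝ) ≠ 0 := by positivity
  have := intervalIntegral.sum_integral_adjacent_intervals (a := fun k : ℕ => (k : ℝ) / T)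
    fun k hk => hf.mono_set <| by
      rw [uIcc_of_le zero_le_one, uIcc_of_le (by gcongr; simp)]
      push_cast
      exact Icc_uniformPartition_subset hk
  simpa [hT'] using this

theorem abs_rightEndpointRule_mul_sub_le {φ ρ : ℝ → ℝ} {Kφ Kρ : ℝ≥0} {a b y M : ℝ} (hab : a ≤ b)
    (hφ : LipschitzOnWith Kφ φ (Icc a b)) (hρ : LipschitzOnWith Kρ ρ (Icc a b))
    (hρ0 : ∀ t ∈ Icc a b, 0 ≤ ρ t) (hy : |y| ≤ M) :
    |(b - a) * y * ρ b - (∫ t in a..b, φ t * ρ t) - (∫ t in a..b, ρ t) * (y - φ b)|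
      ≤ Kρ * M * (b - a) ^ 2 / 2 + Kφ * (b - a) * ∫ t in a..b, ρ t := by
  have hρi : IntervalIntegrable ρ volume a b := hρ.continuousOn.intervalIntegrable_of_Icc hab
  have hφρi : IntervalIntegrable (fun t => φ t * ρ t) volume a b :=
    (hφ.continuousOn.mul hρ.continuousOn).intervalIntegrable_of_Icc hab
  have hρerr := abs_sub_mul_sub_integral_le hab hρ
  have hφerr := abs_mul_integral_sub_integral_mul_le (c := φ b) (δ := Kφ * (b - a)) hab hρi hφρi
    (fun t ht => hρ0 t (Ioc_subset_Icc_self ht)) fun t ht => by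
      have := hφ.dist_le_mul b ⟨hab, le_rfl⟩ t (Ioc_subset_Icc_self ht)
      rw [Real.dist_eq, Real.dist_eq, abs_of_nonneg (sub_nonneg.2 ht.2)] at this
      exact this.trans (mul_le_mul_of_nonneg_left (by linarith [ht.1]) Kφ.coe_nonneg)
  calc _ = |y * ((b - a) * ρ b - ∫ t in a..b, ρ t)
          + (φ b * (∫ t in a..b, ρ t) - ∫ t in a..b, φ t * ρ t)| := by congr 1; ring
    _ ≤ M * (Kρ * (b - a) ^ 2 / 2) + Kφ * (b - a) * ∫ t in a..b, ρ t := by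
        refine (abs_add_le _ _).trans (add_le_add ?_ hφerr)
        rw [abs_mul]
        exact mul_le_mul hy hρerr (abs_nonneg _) ((abs_nonneg y).trans hy)
    _ = _ := by ring

theorem abs_riemannSum_sub_integral_sub_le {φ ρ : ℝ → ℝ} {Kφ Kρ : ℝ≥0} {M : ℝ}
    (hφ : LipschitzOnWith Kφ φ (Icc 0 1)) (hρ : LipschitzOnWith Kρ ρ (Icc 0 1))
    (hρ0 : ∀ t ∈ Icc (0 : ℝ) 1, 0 ≤ ρ t) (hρ1 : ∫ t in (0 : ℝ)..1, ρ t = 1)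
    {T : ℕ} (hT : 0 < T) (y : ℕ → ℝ) (hy : ∀ j, |y j| ≤ M) :
    |(1 / (T : ℝ)) * ∑ j ∈ Finset.range T, y j * ρ (((j : ℝ) + 1) / T)
        - (∫ t in (0 : ℝ)..1, φ t * ρ t)
        - ∑ j ∈ Finset.range T,
            (∫ t in (j : ℝ) / T..((j : ℝ) + 1) / T, ρ t) * (y j - φ (((j : ℝ) + 1) / T))|
      ≤ Kρ * M / (2 * T) + Kφ / T := by
  have hT' : (T : ℝ) ≠ 0 := by positivity
  rw [← sum_integral_uniformPartition (f := fun t => φ t * ρ t)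
      ((hφ.continuousOn.mul hρ.continuousOn).intervalIntegrable_of_Icc zero_le_one) hT,
    Finset.mul_sum, ← Finset.sum_sub_distrib, ← Finset.sum_sub_distrib]
  refine (Finset.abs_sum_le_sum_abs _ _).trans ?_
  calc _ ≤ ∑ j ∈ Finset.range T, (Kρ * M * (1 / (T : ℝ)) ^ 2 / 2
        + Kφ * (1 / (T : ℝ)) * ∫ t in (j : ℝ) / T..((j : ℝ) + 1) / T, ρ t) := by
        refine Finset.sum_le_sum fun j hj => ?_
        have hsub := Icc_uniformPartition_subset (Finset.mem_range.1 hj)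
        have hcell := abs_rightEndpointRule_mul_sub_le
          (div_le_div_of_nonneg_right (by linarith) (Nat.cast_nonneg T))
          (hφ.mono hsub) (hρ.mono hsub) (fun t ht => hρ0 t (hsub ht)) (hy j)
        rw [show ((j : ℝ) + 1) / T - j / T = 1 / T by ring] at hcell
        simpa only [mul_assoc] using hcell
    _ = Kρ * M / (2 * T) + Kφ / T := by
        rw [Finset.sum_add_distrib, ← Finset.mul_sum, sum_integral_uniformPartition
          (hρ.continuousOn.intervalIntegrable_of_Icc zero_le_one) hT, hρ1]
        simp only [Finset.sum_const, Finset.card_range, nsmul_eq_mul]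
        field_simp

theorem integral_uniformPartition_nonneg {ρ : ℝ → ℝ} (hρ0 : ∀ t ∈ Icc (0 : ℝ) 1, 0 ≤ ρ t) {T j : ℕ}
    (hj : j < T) : 0 ≤ ∫ t in (j : ℝ) / T..((j : ℝ) + 1) / T, ρ t :=
  intervalIntegral.integral_nonneg (div_le_div_of_nonneg_right (by linarith) (Nat.cast_nonneg T))
    fun t ht => hρ0 t (Icc_uniformPartition_subset hj ht)

section RiemannSum

variable {h ρ B : ℝ → ℝ} {Kh Kρ L : ℝ≥0} {M : ℝ}
  (hh : LipschitzOnWith Kh h (Icc (-1) 1)) (hhM : ∀ x ∈ Icc (-1 : ℝ) 1, |h x| ≤ M)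
  (hρ : LipschitzOnWith Kρ ρ (Icc 0 1)) (hρ0 : ∀ t ∈ Icc (0 : ℝ) 1, 0 ≤ ρ t)
  (hρ1 : ∫ t in (0 : ℝ)..1, ρ t = 1)
  (hB : LipschitzOnWith L B (Icc 0 1)) (hBmem : MapsTo B (Icc 0 1) (Icc (-1) 1))
  {T : ℕ} (hT : 0 < T)
include hh hhM hρ hρ0 hρ1 hB hBmem hT

theorem sq_riemannSum_sub_integral_le (b : ℕ → ℝ) (hb : ∀ j, b j ∈ Icc (-1 : ℝ) 1) :
    ((1 / (T : ℝ)) * ∑ j ∈ Finset.range T, h (b j) * ρ (((j : ℝ) + 1) / T)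
        - ∫ t in (0 : ℝ)..1, h (B t) * ρ t) ^ 2
      ≤ 2 * Kh ^ 2 * ∑ j ∈ Finset.range T,
          (∫ t in (j : ℝ) / T..((j : ℝ) + 1) / T, ρ t) * (b j - B (((j : ℝ) + 1) / T)) ^ 2
        + 2 * (Kρ * M / (2 * T) + Kh * L / T) ^ 2 := by
  set w : ℕ → ℝ := fun j => ∫ t in (j : ℝ) / T..((j : ℝ) + 1) / T, ρ t
  set E := ∑ j ∈ Finset.range T, w j * (h (b j) - h (B (((j : ℝ) + 1) / T)))
  have hw0 : ∀ j ∈ Finset.range T, 0 ≤ w j := fun j hj =>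
    integral_uniformPartition_nonneg hρ0 (Finset.mem_range.1 hj)
  have hw1 : ∑ j ∈ Finset.range T, w j = 1 := by
    rw [sum_integral_uniformPartition (hρ.continuousOn.intervalIntegrable_of_Icc zero_le_one) hT,
      hρ1]
  have hjensen : E ^ 2 ≤ ∑ j ∈ Finset.range T, w j * (h (b j) - h (B (((j : ℝ) + 1) / T))) ^ 2 := by
    simpa only [smul_eq_mul] using
      (even_two.convexOn_pow (𝕜 := ℝ)).map_sum_le hw0 hw1 fun _ _ => mem_univ _
  have hlip : ∀ j ∈ Finset.range T, w j * (h (b j) - h (B (((j : ℝ) + 1) / T))) ^ 2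
      ≤ Kh ^ 2 * (w j * (b j - B (((j : ℝ) + 1) / T)) ^ 2) := fun j hj => by
    have hsub := Icc_uniformPartition_subset (Finset.mem_range.1 hj)
    have hBj := hBmem (hsub ⟨div_le_div_of_nonneg_right (by linarith) (Nat.cast_nonneg T), le_rfl⟩)
    have := hh.dist_le_mul _ (hb j) _ hBj
    rw [Real.dist_eq, Real.dist_eq] at this
    rw [mul_left_comm]
    refine mul_le_mul_of_nonneg_left ?_ (hw0 j hj)
    simpa only [sq_abs, mul_pow] using pow_le_pow_left₀ (abs_nonneg _) this 2
  set x := (1 / (T : ℝ)) * ∑ j ∈ Finset.range T, h (b j) * ρ (((j : ℝ) + 1) / T)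
    - ∫ t in (0 : ℝ)..1, h (B t) * ρ t
  have herr : |x - E| ≤ Kρ * M / (2 * T) + Kh * L / T := by
    have := abs_riemannSum_sub_integral_sub_le (hh.comp hB hBmem) hρ hρ0 hρ1 hT
      (fun j => h (b j)) fun j => hhM _ (hb j)
    push_cast at this
    exact this
  calc x ^ 2 ≤ 2 * E ^ 2 + 2 * (x - E) ^ 2 := by nlinarith [sq_nonneg (x - 2 * E)]
    _ ≤ 2 * (Kh ^ 2 * ∑ j ∈ Finset.range T, w j * (b j - B (((j : ℝ) + 1) / T)) ^ 2)
        + 2 * (Kρ * M / (2 * T) + Kh * L / T) ^ 2 := by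
      rw [Finset.mul_sum]
      have := sq_le_sq' (abs_le.1 herr).1 (abs_le.1 herr).2
      linarith [hjensen.trans (Finset.sum_le_sum hlip)]
    _ = _ := by ring

theorem integral_sq_riemannSum_sub_integral_le {Ω : Type*} [MeasurableSpace Ω] {P : Measure Ω}
    [IsProbabilityMeasure P] {b : ℕ → Ω → ℝ} (hbm : ∀ j, Measurable (b j))
    (hb : ∀ j ω, b j ω ∈ Icc (-1 : ℝ) 1) {v : ℝ}
    (hv : ∀ j ∈ Finset.range T, ∫ ω, (b j ω - B (((j : ℝ) + 1) / T)) ^ 2 ∂P ≤ v) :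
    ∫ ω, ((1 / (T : ℝ)) * ∑ j ∈ Finset.range T, h (b j ω) * ρ (((j : ℝ) + 1) / T)
        - ∫ t in (0 : ℝ)..1, h (B t) * ρ t) ^ 2 ∂P
      ≤ 2 * Kh ^ 2 * v + 2 * (Kρ * M / (2 * T) + Kh * L / T) ^ 2 := by
  set w : ℕ → ℝ := fun j => ∫ t in (j : ℝ) / T..((j : ℝ) + 1) / T, ρ t
  set β := (Kρ : ℝ) * M / (2 * T) + Kh * L / T
  have hint : ∀ j, Integrable (fun ω => (b j ω - B (((j : ℝ) + 1) / T)) ^ 2) P := fun j =>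
    ((memLp_of_bounded (ae_of_all _ (hb j)) (hbm j).aestronglyMeasurable 2).sub
      (memLp_const _)).integrable_sq
  have hsum : Integrable
      (fun ω => ∑ j ∈ Finset.range T, w j * (b j ω - B (((j : ℝ) + 1) / T)) ^ 2) P :=
    integrable_finsetSum _ fun j _ => (hint j).const_mul (w j)
  calc _ ≤ ∫ ω, (2 * Kh ^ 2 * ∑ j ∈ Finset.range T, w j * (b j ω - B (((j : ℝ) + 1) / T)) ^ 2
        + 2 * β ^ 2) ∂P :=
        integral_mono_of_nonneg (ae_of_all _ fun _ => sq_nonneg _)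
          ((hsum.const_mul _).add (integrable_const _)) (ae_of_all _ fun ω =>
            sq_riemannSum_sub_integral_le hh hhM hρ hρ0 hρ1 hB hBmem hT _ fun j => hb j ω)
    _ = 2 * Kh ^ 2 * ∑ j ∈ Finset.range T, w j * ∫ ω, (b j ω - B (((j : ℝ) + 1) / T)) ^ 2 ∂P
        + 2 * β ^ 2 := by
        rw [integral_add (hsum.const_mul _) (integrable_const _), integral_const_mul,
          integral_finsetSum _ fun j _ => (hint j).const_mul (w j)]
        simp [integral_const_mul]
    _ ≤ 2 * Kh ^ 2 * ∑ j ∈ Finset.range T, w j * v + 2 * β ^ 2 := by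
        gcongr with j hj
        · exact integral_uniformPartition_nonneg hρ0 (Finset.mem_range.1 hj)
        · exact hv j hj
    _ = 2 * Kh ^ 2 * v + 2 * β ^ 2 := by
        rw [← Finset.sum_mul, sum_integral_uniformPartition
          (hρ.continuousOn.intervalIntegrable_of_Icc zero_le_one) hT, hρ1, one_mul]

end RiemannSum

theorem LipschitzWith.sub_of_monotone {f g : ℝ → ℝ} {K : ℝ≥0} (hf : Monotone f) (hg : Monotone g)
    (hfK : ∀ ⦃t u⦄, t ≤ u → f u - f t ≤ K * (u - t))
    (hgK : ∀ ⦃t u⦄, t ≤ u → g u - g t ≤ K * (u - t)) :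
    LipschitzWith K (fun t => f t - g t) := by
  have key : ∀ ⦃t u⦄, t ≤ u → |(f u - g u) - (f t - g t)| ≤ K * (u - t) := fun t u htu => by
    rw [show (f u - g u) - (f t - g t) = (f u - f t) - (g u - g t) by ring]
    exact abs_sub_le_of_nonneg_of_le (sub_nonneg.2 (hf htu)) (hfK htu)
      (sub_nonneg.2 (hg htu)) (hgK htu)
  refine LipschitzWith.of_dist_le_mul fun x y => ?_
  rw [Real.dist_eq, Real.dist_eq]
  rcases le_total x y with hxy | hyx
  · rw [abs_sub_comm, abs_sub_comm x, abs_of_nonneg (sub_nonneg.2 hxy)]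
    exact key hxy
  · rw [abs_of_nonneg (sub_nonneg.2 hyx)]
    exact key hyx

section RelaxedCDF

variable {r : ℝ → ℝ} {ν : Measure ℝ} [IsProbabilityMeasure ν]

theorem integrable_comp_sub_of_mem_Icc (hr : Continuous r) (hr01 : ∀ z, r z ∈ Icc (0 : ℝ) 1)
    (t : ℝ) : Integrable (fun z => r (z - t)) ν :=
  Integrable.of_mem_Icc 0 1 (by fun_prop) (ae_of_all _ fun z => hr01 (z - t))

theorem relaxedCDF_mem_Icc (hr : Continuous r) (hr01 : ∀ z, r z ∈ Icc (0 : ℝ) 1) (t : ℝ) :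
    relaxedCDF r ν t ∈ Icc (0 : ℝ) 1 := by
  have hle : ∫ z, r (z - t) ∂ν ≤ 1 := by
    simpa using integral_mono (integrable_comp_sub_of_mem_Icc (ν := ν) hr hr01 t)
      (integrable_const 1) fun z => (hr01 (z - t)).2
  have hnonneg : 0 ≤ ∫ z, r (z - t) ∂ν := integral_nonneg fun z => (hr01 (z - t)).1
  exact ⟨by unfold relaxedCDF; linarith, by unfold relaxedCDF; linarith⟩

theorem relaxedCDF_monotone (hr : Continuous r) (hrmono : Monotone r)
    (hr01 : ∀ z, r z ∈ Icc (0 : ℝ) 1) : Monotone (relaxedCDF r ν) := fun t u htu => by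
  have := integral_mono (integrable_comp_sub_of_mem_Icc (ν := ν) hr hr01 u)
    (integrable_comp_sub_of_mem_Icc hr hr01 t) fun z => hrmono (sub_le_sub_left htu z)
  unfold relaxedCDF
  linarith

theorem relaxedCDF_sub_le {K : ℝ≥0} (hrLip : LipschitzWith K r)
    (hr01 : ∀ z, r z ∈ Icc (0 : ℝ) 1) {t u : ℝ} (htu : t ≤ u) :
    relaxedCDF r ν u - relaxedCDF r ν t ≤ K * (u - t) := by
  have hint := integrable_comp_sub_of_mem_Icc (ν := ν) hrLip.continuous hr01
  have hpt : ∀ z, r (z - t) - r (z - u) ≤ K * (u - t) := fun z => by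
    have := hrLip.dist_le_mul (z - t) (z - u)
    rw [Real.dist_eq, Real.dist_eq, show z - t - (z - u) = u - t by ring,
      abs_of_nonneg (sub_nonneg.2 htu)] at this
    exact (le_abs_self _).trans this
  have := integral_mono ((hint t).sub (hint u)) (integrable_const _) hpt
  rw [integral_sub' (hint t) (hint u)] at this
  simp only [integral_const, probReal_univ, smul_eq_mul, one_mul] at this
  unfold relaxedCDF
  linarith

theorem lipschitzWith_relaxedCDF_sub {K : ℝ≥0} (hrmono : Monotone r) (hrLip : LipschitzWith K r)
    (hr01 : ∀ z, r z ∈ Icc (0 : ℝ) 1) (ν' : Measure ℝ) [IsProbabilityMeasure ν'] :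
    LipschitzWith K (fun t => relaxedCDF r ν t - relaxedCDF r ν' t) :=
  LipschitzWith.sub_of_monotone (relaxedCDF_monotone hrLip.continuous hrmono hr01)
    (relaxedCDF_monotone hrLip.continuous hrmono hr01) (fun _ _ => relaxedCDF_sub_le hrLip hr01)
    (fun _ _ => relaxedCDF_sub_le hrLip hr01)

end RelaxedCDF

/-- The paper's estimator is `B̂ = empiricalRelaxedCDF r Z0 - empiricalRelaxedCDF r Z1`. -/
noncomputable def empiricalRelaxedCDF {Ω : Type*} (r : ℝ → ℝ) {m : ℕ} (Z : Fin m → Ω → ℝ) (t : ℝ)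
    (ω : Ω) : ℝ :=
  1 - (1 / (m : ℝ)) * ∑ i, r (Z i ω - t)

theorem empiricalRelaxedCDF_sub_empiricalRelaxedCDF {Ω : Type*} (r : ℝ → ℝ) {m₀ m₁ : ℕ}
    (Z₀ : Fin m₀ → Ω → ℝ) (Z₁ : Fin m₁ → Ω → ℝ) (t : ℝ) (ω : Ω) :
    empiricalRelaxedCDF r Z₀ t ω - empiricalRelaxedCDF r Z₁ t ω
      = (1 / (m₁ : ℝ)) * ∑ i, r (Z₁ i ω - t) - (1 / (m₀ : ℝ)) * ∑ i, r (Z₀ i ω - t) := by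
  unfold empiricalRelaxedCDF
  ring

theorem empiricalRelaxedCDF_mem_Icc {Ω : Type*} {r : ℝ → ℝ} (hr01 : ∀ z, r z ∈ Icc (0 : ℝ) 1)
    {m : ℕ} (hm : 0 < m) (Z : Fin m → Ω → ℝ) (t : ℝ) (ω : Ω) :
    empiricalRelaxedCDF r Z t ω ∈ Icc (0 : ℝ) 1 := by
  have hsum : ∑ i, r (Z i ω - t) ≤ m := by
    simpa using Finset.sum_le_sum fun i (_ : i ∈ Finset.univ) => (hr01 (Z i ω - t)).2
  have hmean : (1 / (m : ℝ)) * ∑ i, r (Z i ω - t) ∈ Icc (0 : ℝ) 1 :=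
    ⟨mul_nonneg (by positivity) (Finset.sum_nonneg fun i _ => (hr01 _).1),
      by rw [one_div_mul_eq_div, div_le_one (by exact_mod_cast hm)]; exact hsum⟩
  unfold empiricalRelaxedCDF
  exact ⟨by linarith [hmean.2], by linarith [hmean.1]⟩

section Empirical

variable {Ω : Type*} [MeasurableSpace Ω] {P : Measure Ω} [IsProbabilityMeasure P]

theorem variance_sum_mul_le {ι : Type*} {s : Finset ι} (c : ι → ℝ) {X : ι → Ω → ℝ} {a b : ℝ}
    (hX : ∀ i ∈ s, AEMeasurable (X i) P) (hXab : ∀ i ∈ s, ∀ᵐ ω ∂P, X i ω ∈ Icc a b)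
    (hind : Set.Pairwise s fun i j => X i ⟂ᵢ[P] X j) :
    Var[fun ω => ∑ i ∈ s, c i * X i ω; P] ≤ (∑ i ∈ s, c i ^ 2) * ((b - a) / 2) ^ 2 := by
  have hsum : (fun ω => ∑ i ∈ s, c i * X i ω) = ∑ i ∈ s, fun ω => c i * X i ω := by
    ext ω; simp
  rw [hsum, IndepFun.variance_sum (fun i hi => (memLp_of_bounded (hXab i hi)
      (hX i hi).aestronglyMeasurable 2).const_mul (c i))
    (hind.mono' fun i j hij => hij.comp (measurable_const_mul (c i)) (measurable_const_mul (c j))),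
    Finset.sum_mul]
  refine Finset.sum_le_sum fun i hi => ?_
  rw [variance_const_mul]
  exact mul_le_mul_of_nonneg_left (variance_le_sq_of_bounded (hXab i hi) (hX i hi)) (sq_nonneg _)

variable {r : ℝ → ℝ} (hr : Continuous r) (hr01 : ∀ z, r z ∈ Icc (0 : ℝ) 1)
include hr hr01

theorem integrable_empiricalRelaxedCDF {m : ℕ} {Z : Fin m → Ω → ℝ} (hZ : ∀ i, Measurable (Z i))
    (t : ℝ) : Integrable (empiricalRelaxedCDF r Z t) P :=
  (integrable_const 1).sub <| (integrable_finsetSum _ fun i _ =>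
    Integrable.of_mem_Icc 0 1 (by fun_prop) (ae_of_all _ fun ω => hr01 (Z i ω - t))).const_mul _

theorem integral_empiricalRelaxedCDF {m : ℕ} (hm : 0 < m) {Z : Fin m → Ω → ℝ}
    (hZ : ∀ i, Measurable (Z i)) {ν : Measure ℝ} [IsProbabilityMeasure ν]
    (hlaw : ∀ i, P.map (Z i) = ν) (t : ℝ) :
    ∫ ω, empiricalRelaxedCDF r Z t ω ∂P = relaxedCDF r ν t := by
  have hmean : ∀ i, ∫ ω, r (Z i ω - t) ∂P = ∫ z, r (z - t) ∂ν := fun i => by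
    rw [← hlaw i, integral_map (hZ i).aemeasurable (by fun_prop)]
  have hint : ∀ i, Integrable (fun ω => r (Z i ω - t)) P := fun i =>
    Integrable.of_mem_Icc 0 1 (by fun_prop) (ae_of_all _ fun ω => hr01 _)
  unfold empiricalRelaxedCDF relaxedCDF
  rw [integral_sub (integrable_const 1) ((integrable_finsetSum _ fun i _ => hint i).const_mul _),
    integral_const_mul, integral_finsetSum _ fun i _ => hint i]
  simp [hmean]
  field_simp

theorem integral_sq_empiricalRelaxedCDF_sub_sub_le {m₀ m₁ : ℕ} (hm₀ : 0 < m₀) (hm₁ : 0 < m₁)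
    {Z₀ : Fin m₀ → Ω → ℝ} {Z₁ : Fin m₁ → Ω → ℝ} (hZ₀ : ∀ i, Measurable (Z₀ i))
    (hZ₁ : ∀ i, Measurable (Z₁ i)) (hindep : iIndepFun (Sum.elim Z₀ Z₁) P)
    {ν₀ ν₁ : Measure ℝ} [IsProbabilityMeasure ν₀] [IsProbabilityMeasure ν₁]
    (hlaw₀ : ∀ i, P.map (Z₀ i) = ν₀) (hlaw₁ : ∀ i, P.map (Z₁ i) = ν₁) (t : ℝ) :
    ∫ ω, (empiricalRelaxedCDF r Z₀ t ω - empiricalRelaxedCDF r Z₁ t ω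
      - (relaxedCDF r ν₀ t - relaxedCDF r ν₁ t)) ^ 2 ∂P ≤ (1 / (m₀ : ℝ) + 1 / (m₁ : ℝ)) / 4 := by
  have hZ : ∀ i, Measurable (Sum.elim Z₀ Z₁ i) := fun i => by cases i <;> simp [hZ₀, hZ₁]
  set X : Fin m₀ ⊕ Fin m₁ → Ω → ℝ := fun i ω => r (Sum.elim Z₀ Z₁ i ω - t)
  set c : Fin m₀ ⊕ Fin m₁ → ℝ := Sum.elim (fun _ => -(1 / (m₀ : ℝ))) (fun _ => 1 / (m₁ : ℝ))
  -- one weighted sum over the independent family `Sum.elim Z₀ Z₁`, so the variances add up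
  have hdiff : (fun ω => empiricalRelaxedCDF r Z₀ t ω - empiricalRelaxedCDF r Z₁ t ω)
      = fun ω => ∑ i, c i * X i ω := by
    ext ω
    simp [X, c, empiricalRelaxedCDF, Fintype.sum_sum_type, Finset.mul_sum]
    ring
  have hmean : P[fun ω => empiricalRelaxedCDF r Z₀ t ω - empiricalRelaxedCDF r Z₁ t ω]
      = relaxedCDF r ν₀ t - relaxedCDF r ν₁ t := by
    rw [integral_sub (integrable_empiricalRelaxedCDF hr hr01 hZ₀ t)
      (integrable_empiricalRelaxedCDF hr hr01 hZ₁ t),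
      integral_empiricalRelaxedCDF hr hr01 hm₀ hZ₀ hlaw₀,
      integral_empiricalRelaxedCDF hr hr01 hm₁ hZ₁ hlaw₁]
  rw [← hmean, ← variance_eq_integral (by rw [hdiff]; fun_prop), hdiff]
  have hshift : Measurable fun x => r (x - t) := hr.measurable.comp (measurable_sub_const t)
  refine (variance_sum_mul_le c (a := 0) (b := 1) (fun i _ => (hshift.comp (hZ i)).aemeasurable)
    (fun i _ => ae_of_all _ fun ω => hr01 _)
    (fun i _ j _ hij => (hindep.indepFun hij).comp hshift hshift)).trans_eq ?_
  simp [c, Fintype.sum_sum_type]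
  field_simp
  ring

end Empirical

theorem sub_mem_Icc_neg_one_one_s6 {x y : ℝ} (hx : x ∈ Icc (0 : ℝ) 1) (hy : y ∈ Icc (0 : ℝ) 1) :
    x - y ∈ Icc (-1 : ℝ) 1 :=
  ⟨by linarith [hx.1, hy.2], by linarith [hx.2, hy.1]⟩

theorem two_mul_sq_mul_one_div_add_one_div_le (C : ℝ) {m₀ m₁ : ℝ} (hm₀ : 0 < m₀) (hm₁ : 0 < m₁) :
    2 * C ^ 2 * ((1 / m₀ + 1 / m₁) / 4) ≤ C ^ 2 / min m₀ m₁ := by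
  have hmin : 0 < min m₀ m₁ := lt_min hm₀ hm₁
  calc 2 * C ^ 2 * ((1 / m₀ + 1 / m₁) / 4)
      ≤ 2 * C ^ 2 * ((1 / min m₀ m₁ + 1 / min m₀ m₁) / 4) := by
        gcongr <;> simp
    _ = C ^ 2 / min m₀ m₁ := by ring

theorem two_mul_sq_add_div_le {Cρ Cφ M T : ℝ} (hCρ : 0 ≤ Cρ) (hCφ : 0 ≤ Cφ) (hM : 0 ≤ M)
    (hT : 0 < T) :
    2 * (Cρ * M / (2 * T) + Cφ / T) ^ 2 ≤ ((Cρ + 1) * (2 * Cφ + M)) ^ 2 / (2 * T ^ 2) := by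
  have hle : Cρ * M / (2 * T) + Cφ / T ≤ (Cρ + 1) * (2 * Cφ + M) / (2 * T) := by
    rw [div_add_div _ _ (by positivity) hT.ne', div_le_div_iff₀ (by positivity) (by positivity)]
    nlinarith [mul_nonneg hCρ hCφ, mul_nonneg (mul_nonneg hCρ hCφ) hT.le, mul_nonneg hM hT.le]
  calc 2 * (Cρ * M / (2 * T) + Cφ / T) ^ 2 ≤ 2 * ((Cρ + 1) * (2 * Cφ + M) / (2 * T)) ^ 2 := by
        gcongr
    _ = ((Cρ + 1) * (2 * Cφ + M)) ^ 2 / (2 * T ^ 2) := by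
        field_simp

/-- **Threshold-discrete estimator bound.** For the uniform partition
`t_j = j/T` of `[0,1]`, the mean squared error of the threshold-discretized estimator
of `∫_0^1 h(B_s(t)) ρ(t) dt` is at most `8 C_h²/min(m0,m1) + C²/(2T²)` with
`C = (C_ρ+1)(2 s C_r C_h + M_h)`. -/
theorem stmt_6 {Ω : Type*} [MeasurableSpace Ω] (P : MeasureTheory.Measure Ω)
    [MeasureTheory.IsProbabilityMeasure P]
    (h : ℝ → ℝ) (C_h : ℝ) (hC : 0 ≤ C_h)
    (hLip : LipschitzOnWith (Real.toNNReal C_h) h (Set.Icc (-1 : ℝ) 1))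
    (hpos : ∀ x ∈ Set.Icc (-1 : ℝ) 1, 0 ≤ h x)
    (M_h : ℝ) (hMh : IsGreatest (h '' Set.Icc (-1 : ℝ) 1) M_h)
    (ρ : ℝ → ℝ) (C_ρ : ℝ) (hCρ : 0 ≤ C_ρ)
    (hρLip : LipschitzOnWith (Real.toNNReal C_ρ) ρ (Set.Icc (0 : ℝ) 1))
    (hρpos : ∀ t ∈ Set.Icc (0 : ℝ) 1, 0 ≤ ρ t)
    (hρdens : ∫ t in (0 : ℝ)..1, ρ t = 1)
    (ν0 ν1 : MeasureTheory.Measure ℝ)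
    [MeasureTheory.IsProbabilityMeasure ν0] [MeasureTheory.IsProbabilityMeasure ν1]
    (s C_r : ℝ) (hs : 0 < s) (hCr : 0 < C_r)
    (r : ℝ → ℝ) (hrmono : Monotone r)
    (hrLip : LipschitzWith (Real.toNNReal (s * C_r)) r)
    (hr01 : ∀ z, r z ∈ Set.Icc (0 : ℝ) 1)
    (m0 m1 T : ℕ) (hm0 : 0 < m0) (hm1 : 0 < m1) (hT : 0 < T)
    (Z0 : Fin m0 → Ω → ℝ) (Z1 : Fin m1 → Ω → ℝ)
    (hZ0m : ∀ i, Measurable (Z0 i)) (hZ1m : ∀ i, Measurable (Z1 i))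
    (hlaw0 : ∀ i, P.map (Z0 i) = ν0) (hlaw1 : ∀ i, P.map (Z1 i) = ν1)
    (hindep : ProbabilityTheory.iIndepFun
      (Sum.elim Z0 Z1) P) :
    ∫ ω, ((1 / (T : ℝ)) * ∑ j ∈ Finset.range T,
            h ((1 / (m1 : ℝ)) * ∑ i : Fin m1, r (Z1 i ω - ((j : ℝ) + 1) / (T : ℝ))
              - (1 / (m0 : ℝ)) * ∑ i : Fin m0, r (Z0 i ω - ((j : ℝ) + 1) / (T : ℝ)))
            * ρ (((j : ℝ) + 1) / (T : ℝ))
          - ∫ t in (0 : ℝ)..1, h (relaxedCDF r ν0 t - relaxedCDF r ν1 t) * ρ t) ^ 2 ∂P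
      ≤ 8 * C_h ^ 2 / min (m0 : ℝ) (m1 : ℝ)
        + ((C_ρ + 1) * (2 * s * C_r * C_h + M_h)) ^ 2 / (2 * (T : ℝ) ^ 2) := by
  have hr : Continuous r := hrLip.continuous
  have hsCr : 0 ≤ s * C_r := by positivity
  have hMh0 : 0 ≤ M_h := by
    obtain ⟨x, hx, rfl⟩ := hMh.1
    exact hpos x hx
  have hhM : ∀ x ∈ Icc (-1 : ℝ) 1, |h x| ≤ M_h := fun x hx =>
    (abs_of_nonneg (hpos x hx)).trans_le (hMh.2 ⟨x, hx, rfl⟩)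
  have key := integral_sq_riemannSum_sub_integral_le (P := P) hLip hhM hρLip hρpos hρdens
    (lipschitzWith_relaxedCDF_sub hrmono hrLip hr01 ν1).lipschitzOnWith
    (fun t _ => sub_mem_Icc_neg_one_one_s6 (relaxedCDF_mem_Icc hr hr01 t)
      (relaxedCDF_mem_Icc hr hr01 t)) hT
    (b := fun j ω => empiricalRelaxedCDF r Z0 (((j : ℝ) + 1) / T) ω
      - empiricalRelaxedCDF r Z1 (((j : ℝ) + 1) / T) ω)
    (fun j => by unfold empiricalRelaxedCDF; fun_prop)
    (fun j ω => sub_mem_Icc_neg_one_one_s6 (empiricalRelaxedCDF_mem_Icc hr01 hm0 _ _ _)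
      (empiricalRelaxedCDF_mem_Icc hr01 hm1 _ _ _))
    (fun j _ => integral_sq_empiricalRelaxedCDF_sub_sub_le hr hr01 hm0 hm1 hZ0m hZ1m hindep
      hlaw0 hlaw1 _)
  simp only [empiricalRelaxedCDF_sub_empiricalRelaxedCDF, Real.coe_toNNReal _ hC,
    Real.coe_toNNReal _ hCρ, Real.coe_toNNReal _ hsCr] at key
  refine key.trans (add_le_add ?_ ?_)
  · refine (two_mul_sq_mul_one_div_add_one_div_le C_h (by positivity) (by positivity)).trans ?_
    gcongr
    nlinarith [sq_nonneg C_h]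
  · exact (two_mul_sq_add_div_le hCρ (mul_nonneg hC hsCr) hMh0 (by positivity)).trans_eq
      (by ring)
end
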